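/- arXiv:2512.11380 — 7 statements merged into one kernel-verified Lean document; each statement's English description precedes it below -/
import Mathlib

section
/- Let Ω̃ and Ω be open subsets of ℂ, let φ : Ω̃ → Ω be a holomorphic bijection, let p > 2 and 1 ≤ q < p. Then for every continuously differentiable function f : Ω → ℝ, (∫_{Ω̃} ‖∇(f∘φ)(w)‖^q dA(w))^{1/q} ≤ (∫_{Ω̃} |φ'(w)|^{q(p-2)/(p-q)} dA(w))^{(p-q)/(pq)} · (∫_{Ω} ‖∇f(z)‖^p dA(z))^{1/p} (an inequality in [0,∞]). -/
open MeasureTheory Set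
open scoped ENNReal

/-! The real derivative of `f ∘ φ` at `w` is `Df(φ w)` composed with multiplication by `φ' w`,
so `|∇(f ∘ φ)| ≤ |∇f ∘ φ| |φ'|`. Splitting `|∇f ∘ φ| |φ'| = |φ'| ^ (1 - 2/p) · |∇f ∘ φ| |φ'| ^ (2/p)`
and applying Hölder with exponents `pq/(p - q)` and `p`, the second factor becomes
`∫ |∇f ∘ φ| ^ p |φ'| ^ 2`, which is `∫_Ω |∇f| ^ p` because the real Jacobian of `φ` is `|φ'| ^ 2`. -/

theorem Complex.det_restrictScalars_toSpanSingleton (c : ℂ) :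
    ((ContinuousLinearMap.toSpanSingleton ℂ c).restrictScalars ℝ).det = Complex.normSq c := by
  simp [ContinuousLinearMap.det, LinearMap.det_restrictScalars, Algebra.norm_complex_eq]

theorem lintegral_image_eq_lintegral_enorm_deriv_sq_mul {s : Set ℂ} (hs : MeasurableSet s)
    {φ φ' : ℂ → ℂ} (hφ : ∀ w ∈ s, HasDerivWithinAt φ (φ' w) s w) (hinj : InjOn φ s)
    (g : ℂ → ℝ≥0∞) :
    ∫⁻ z in φ '' s, g z = ∫⁻ w in s, ‖φ' w‖ₑ ^ 2 * g (φ w) := by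
  rw [lintegral_image_eq_lintegral_abs_det_fderiv_mul volume hs
    (fun w hw => (hφ w hw).hasFDerivWithinAt.restrictScalars ℝ) hinj]
  simp [Complex.det_restrictScalars_toSpanSingleton, Complex.normSq_eq_norm_sq, ENNReal.ofReal_pow,
    ofReal_norm]

theorem HasDerivAt.enorm_fderiv_comp_le {G : Type*} [NormedAddCommGroup G] [NormedSpace ℝ G]
    {f : ℂ → G} {φ : ℂ → ℂ} {φ' w : ℂ} (hφ : HasDerivAt φ φ' w)
    (hf : DifferentiableAt ℝ f (φ w)) :
    ‖fderiv ℝ (f ∘ φ) w‖ₑ ≤ ‖fderiv ℝ f (φ w)‖ₑ * ‖φ'‖ₑ := by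
  rw [(hf.hasFDerivAt.comp w (hφ.hasFDerivAt.restrictScalars ℝ)).fderiv]
  calc _ ≤ ‖fderiv ℝ f (φ w)‖ₑ * ‖(ContinuousLinearMap.toSpanSingleton ℂ φ').restrictScalars ℝ‖ₑ :=
        ContinuousLinearMap.opENorm_comp_le _ _
    _ = _ := by
      congr 1
      rw [← ofReal_norm, ContinuousLinearMap.norm_restrictScalars,
        ContinuousLinearMap.norm_toSpanSingleton, ofReal_norm]

theorem aemeasurable_restrict_of_hasDerivAt {𝕜 F : Type*} [NontriviallyNormedField 𝕜]
    [NormedAddCommGroup F] [NormedSpace 𝕜 F] [CompleteSpace F] [MeasurableSpace 𝕜]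
    [OpensMeasurableSpace 𝕜] [MeasurableSpace F] [BorelSpace F] {μ : Measure 𝕜} {s : Set 𝕜}
    (hs : MeasurableSet s) {f f' : 𝕜 → F} (hf : ∀ x ∈ s, HasDerivAt f (f' x) x) :
    AEMeasurable f' (μ.restrict s) :=
  (measurable_deriv f).aemeasurable.congr (ae_restrict_of_forall_mem hs fun x hx => (hf x hx).deriv)

theorem ENNReal.lintegral_mul_rpow_le_weighted_holder {α : Type*} [MeasurableSpace α]
    (μ : Measure α) {F Φ : α → ℝ≥0∞} (hF : AEMeasurable F μ) (hΦ : AEMeasurable Φ μ)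
    {p q a : ℝ} (hq : 0 < q) (hqp : q < p) (ha : 0 ≤ a) (hap : a ≤ p) :
    (∫⁻ x, (F x * Φ x) ^ q ∂μ) ^ (1 / q)
      ≤ (∫⁻ x, Φ x ^ (q * (p - a) / (p - q)) ∂μ) ^ ((p - q) / (p * q))
        * (∫⁻ x, F x ^ p * Φ x ^ a ∂μ) ^ (1 / p) := by
  have hp : 0 < p := hq.trans hqp
  have hpq : 0 < p - q := sub_pos.2 hqp
  have hsplit : ∀ x, F x * Φ x = Φ x ^ (1 - a / p) * (F x * Φ x ^ (a / p)) := fun x => by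
    rw [mul_left_comm, ← ENNReal.rpow_add_of_nonneg _ _
      (sub_nonneg.2 ((div_le_one hp).2 hap)) (by positivity), sub_add_cancel, ENNReal.rpow_one]
  have hΦpow : ∀ x, (Φ x ^ (1 - a / p)) ^ (p * q / (p - q)) = Φ x ^ (q * (p - a) / (p - q)) :=
    fun x => by rw [← ENNReal.rpow_mul]; congr 1; field_simp
  have hFpow : ∀ x, (F x * Φ x ^ (a / p)) ^ p = F x ^ p * Φ x ^ a := fun x => by
    rw [ENNReal.mul_rpow_of_nonneg _ _ hp.le, ← ENNReal.rpow_mul, div_mul_cancel₀ a hp.ne']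
  have holder := ENNReal.lintegral_Lp_mul_le_Lq_mul_Lr hq
    (show q < p * q / (p - q) by rw [lt_div_iff₀ hpq]; nlinarith)
    (show 1 / q = 1 / (p * q / (p - q)) + 1 / p by field_simp; ring) μ
    (hΦ.pow_const (1 - a / p)) (hF.mul (hΦ.pow_const (a / p)))
  simpa only [Pi.mul_apply, ← hsplit, hΦpow, hFpow, one_div_div] using holder

theorem conformal_composition_gradient_estimate
    (Ω' Ω : Set ℂ) (hΩ'o : IsOpen Ω') (hΩo : IsOpen Ω)
    (φ : ℂ → ℂ) (φ' : ℂ → ℂ)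
    (hholo : ∀ w ∈ Ω', HasDerivAt φ (φ' w) w)
    (hbij : Set.BijOn φ Ω' Ω)
    (p q : ℝ) (hp : 2 < p) (hq1 : 1 ≤ q) (hqp : q < p)
    (f : ℂ → ℝ) (hf : ContDiffOn ℝ 1 f Ω) :
    (∫⁻ w in Ω', (‖fderiv ℝ (f ∘ φ) w‖₊ : ℝ≥0∞) ^ q) ^ (1 / q)
      ≤ (∫⁻ w in Ω', (‖φ' w‖₊ : ℝ≥0∞) ^ (q * (p - 2) / (p - q))) ^ ((p - q) / (p * q))
        * (∫⁻ z in Ω, (‖fderiv ℝ f z‖₊ : ℝ≥0∞) ^ p) ^ (1 / p) := by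
  have hq : 0 < q := one_pos.trans_le hq1
  have hΩ' : MeasurableSet Ω' := hΩ'o.measurableSet
  have hφ : AEMeasurable φ (volume.restrict Ω') :=
    ContinuousOn.aemeasurable (fun w hw => (hholo w hw).continuousAt.continuousWithinAt) hΩ'
  have hchain : ∀ w ∈ Ω', ‖fderiv ℝ (f ∘ φ) w‖ₑ ≤ ‖fderiv ℝ f (φ w)‖ₑ * ‖φ' w‖ₑ := fun w hw =>
    (hholo w hw).enorm_fderiv_comp_le
      ((hf.contDiffAt (hΩo.mem_nhds (hbij.mapsTo hw))).differentiableAt one_ne_zero)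
  have hchange : ∫⁻ w in Ω', ‖fderiv ℝ f (φ w)‖ₑ ^ p * ‖φ' w‖ₑ ^ (2 : ℝ)
      = ∫⁻ z in Ω, ‖fderiv ℝ f z‖ₑ ^ p := by
    rw [← hbij.image_eq, lintegral_image_eq_lintegral_enorm_deriv_sq_mul hΩ'
      (fun w hw => (hholo w hw).hasDerivWithinAt) hbij.injOn]
    simp_rw [ENNReal.rpow_two, mul_comm]
  calc (∫⁻ w in Ω', ‖fderiv ℝ (f ∘ φ) w‖ₑ ^ q) ^ (1 / q)
      ≤ (∫⁻ w in Ω', (‖fderiv ℝ f (φ w)‖ₑ * ‖φ' w‖ₑ) ^ q) ^ (1 / q) := by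
        gcongr ?_ ^ _
        exact setLIntegral_mono' hΩ' fun w hw => by gcongr; exact hchain w hw
    _ ≤ _ := ENNReal.lintegral_mul_rpow_le_weighted_holder _
        (F := fun w => ‖fderiv ℝ f (φ w)‖ₑ) ((measurable_fderiv ℝ f).enorm.comp_aemeasurable hφ)
        (aemeasurable_restrict_of_hasDerivAt hΩ' hholo).enorm hq hqp zero_le_two hp.le
    _ = _ := by rw [hchange]; rfl
end

section
/- Let Ω̃ and Ω be open subsets of ℝ², let φ : Ω̃ → Ω be a C¹-diffeomorphism whose Jacobian determinant J(w,φ) = det Dφ(w) is nowhere zero, and let 1 ≤ q < p < ∞. Set K_{p,q} = (∫_{Ω̃} (‖Dφ(w)‖^p / |J(w,φ)|)^{q/(p-q)} dA(w))^{(p-q)/(pq)}, where ‖Dφ(w)‖ is the operator norm of the differential. If K_{p,q} < ∞, then for every continuously differentiable function f : Ω → ℝ one has (∫_{Ω̃} ‖∇(f∘φ)(w)‖^q dA(w))^{1/q} ≤ K_{p,q} · (∫_{Ω} ‖∇f(x)‖^p dA(x))^{1/p} (an inequality in [0,∞]). -/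
open MeasureTheory Real Set
open scoped ENNReal

/-!
Pointwise, `‖D(f ∘ φ)‖ ≤ ‖Df ∘ φ‖ · ‖Dφ‖`. Split the right-hand side as
`(‖Df ∘ φ‖ |J|^{1/p}) · (‖Dφ‖ |J|^{-1/p})` and apply Hölder with exponents `p/q` and `p/(p-q)`:
the first factor gives `∫ |J| ‖Df ∘ φ‖^p`, which is `∫_Ω ‖Df‖^p` by the change of variables
formula, and the second gives exactly `K_{p,q}`.
-/

theorem Real.holderConjugate_div_div_sub {p q : ℝ} (hq : 0 < q) (hqp : q < p) :
    Real.HolderConjugate (p / q) (p / (p - q)) := by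
  rw [Real.holderConjugate_iff]
  constructor
  · rw [lt_div_iff₀ hq]; linarith
  · have hp : p ≠ 0 := by linarith
    have hpq : p - q ≠ 0 := by linarith
    field_simp; ring

namespace ENNReal

variable {α : Type*} [MeasurableSpace α] {μ : Measure α}

theorem lintegral_mul_rpow_le_weighted {g h J : α → ℝ≥0∞} {p q : ℝ} (hq : 0 < q) (hqp : q < p)
    (hg : AEMeasurable g μ) (hh : AEMeasurable h μ) (hJ : AEMeasurable J μ)
    (hJ0 : ∀ᵐ w ∂μ, J w ≠ 0) (hJtop : ∀ᵐ w ∂μ, J w ≠ ⊤) :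
    (∫⁻ w, (g w * h w) ^ q ∂μ) ^ (1 / q)
      ≤ (∫⁻ w, (h w ^ p / J w) ^ (q / (p - q)) ∂μ) ^ ((p - q) / (p * q))
        * (∫⁻ w, J w * g w ^ p ∂μ) ^ (1 / p) := by
  have hp : 0 < p := hq.trans hqp
  have hpq : 0 < p - q := sub_pos.2 hqp
  set F : α → ℝ≥0∞ := fun w => g w ^ q * J w ^ (q / p)
  set G : α → ℝ≥0∞ := fun w => h w ^ q / J w ^ (q / p)
  have hsplit : ∀ᵐ w ∂μ, (g w * h w) ^ q = (F * G) w := by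
    filter_upwards [hJ0, hJtop] with w hw0 hwtop
    have h0 : J w ^ (q / p) ≠ 0 := (rpow_pos (pos_iff_ne_zero.2 hw0) hwtop).ne'
    have htop : J w ^ (q / p) ≠ ⊤ := rpow_ne_top_of_nonneg (by positivity) hwtop
    simp only [Pi.mul_apply, F, G]
    rw [mul_assoc, ENNReal.mul_div_cancel' (fun hz => absurd hz h0) (fun hz => absurd hz htop),
      mul_rpow_of_nonneg _ _ hq.le]
  have hF : ∀ w, F w ^ (p / q) = J w * g w ^ p := fun w => by
    simp only [F]
    rw [mul_rpow_of_nonneg _ _ (by positivity), ← rpow_mul, ← rpow_mul,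
      show q * (p / q) = p by field_simp, show q / p * (p / q) = 1 by field_simp, rpow_one,
      mul_comm]
  have hG : ∀ w, G w ^ (p / (p - q)) = (h w ^ p / J w) ^ (q / (p - q)) := fun w => by
    simp only [G]
    rw [div_rpow_of_nonneg _ _ (by positivity), div_rpow_of_nonneg _ _ (by positivity),
      ← rpow_mul, ← rpow_mul, ← rpow_mul,
      show q * (p / (p - q)) = p * (q / (p - q)) by field_simp,
      show q / p * (p / (p - q)) = q / (p - q) by field_simp]
  have holder := lintegral_mul_le_Lp_mul_Lq μ (Real.holderConjugate_div_div_sub hq hqp) (f := F)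
    (g := G) ((hg.pow_const q).mul (hJ.pow_const (q / p)))
    ((hh.pow_const q).div (hJ.pow_const (q / p)))
  simp only [hF, hG] at holder
  calc (∫⁻ w, (g w * h w) ^ q ∂μ) ^ (1 / q)
      = (∫⁻ w, (F * G) w ∂μ) ^ (1 / q) := by rw [lintegral_congr_ae hsplit]
    _ ≤ ((∫⁻ w, J w * g w ^ p ∂μ) ^ (1 / (p / q))
          * (∫⁻ w, (h w ^ p / J w) ^ (q / (p - q)) ∂μ) ^ (1 / (p / (p - q)))) ^ (1 / q) :=
        rpow_le_rpow holder (by positivity)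
    _ = (∫⁻ w, (h w ^ p / J w) ^ (q / (p - q)) ∂μ) ^ ((p - q) / (p * q))
          * (∫⁻ w, J w * g w ^ p ∂μ) ^ (1 / p) := by
        rw [mul_rpow_of_nonneg _ _ (by positivity), ← rpow_mul, ← rpow_mul, mul_comm,
          show 1 / (p / q) * (1 / q) = 1 / p by field_simp,
          show 1 / (p / (p - q)) * (1 / q) = (p - q) / (p * q) by field_simp]

end ENNReal

theorem nnnorm_fderiv_comp_le {𝕜 E F G : Type*} [NontriviallyNormedField 𝕜]
    [NormedAddCommGroup E] [NormedSpace 𝕜 E] [NormedAddCommGroup F] [NormedSpace 𝕜 F]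
    [NormedAddCommGroup G] [NormedSpace 𝕜 G] {f : F → G} {φ : E → F} {w : E}
    (hf : DifferentiableAt 𝕜 f (φ w)) (hφ : DifferentiableAt 𝕜 φ w) :
    ‖fderiv 𝕜 (f ∘ φ) w‖₊ ≤ ‖fderiv 𝕜 f (φ w)‖₊ * ‖fderiv 𝕜 φ w‖₊ := by
  rw [fderiv_comp w hf hφ]
  exact ContinuousLinearMap.opNNNorm_comp_le _ _

section CompositionOperator

variable {E F : Type*} [NormedAddCommGroup E] [NormedSpace ℝ E] [FiniteDimensional ℝ E]
  [MeasurableSpace E] [BorelSpace E] [NormedAddCommGroup F] [NormedSpace ℝ F]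

theorem lintegral_image_eq_lintegral_abs_det_fderiv_mul_of_isOpen
    (μ : Measure E) [μ.IsAddHaarMeasure] {s : Set E} {φ : E → E}
    (hs : IsOpen s) (hφ : DifferentiableOn ℝ φ s) (hinj : InjOn φ s) (u : E → ℝ≥0∞) :
    ∫⁻ x in φ '' s, u x ∂μ = ∫⁻ w in s, ENNReal.ofReal |(fderiv ℝ φ w).det| * u (φ w) ∂μ :=
  lintegral_image_eq_lintegral_abs_det_fderiv_mul μ hs.measurableSet
    (fun w hw => ((hφ w hw).differentiableAt (hs.mem_nhds hw)).hasFDerivAt.hasFDerivWithinAt)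
    hinj u

theorem lintegral_nnnorm_fderiv_comp_rpow_le (μ : Measure E) [μ.IsAddHaarMeasure]
    {s t : Set E} (hs : IsOpen s) (ht : IsOpen t) {φ : E → E} (hbij : BijOn φ s t)
    (hφ : ContDiffOn ℝ 1 φ s) (hJ : ∀ w ∈ s, (fderiv ℝ φ w).det ≠ 0)
    {f : E → F} (hf : ContDiffOn ℝ 1 f t) {p q : ℝ} (hq : 0 < q) (hqp : q < p) :
    (∫⁻ w in s, (‖fderiv ℝ (f ∘ φ) w‖₊ : ℝ≥0∞) ^ q ∂μ) ^ (1 / q)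
      ≤ (∫⁻ w in s, ((‖fderiv ℝ φ w‖₊ : ℝ≥0∞) ^ p / ENNReal.ofReal |(fderiv ℝ φ w).det|)
          ^ (q / (p - q)) ∂μ) ^ ((p - q) / (p * q))
        * (∫⁻ x in t, (‖fderiv ℝ f x‖₊ : ℝ≥0∞) ^ p ∂μ) ^ (1 / p) := by
  have hms : MeasurableSet s := hs.measurableSet
  have hDφ := hφ.continuousOn_fderiv_of_isOpen hs le_rfl
  have hDf := (hf.continuousOn_fderiv_of_isOpen ht le_rfl).comp hφ.continuousOn hbij.mapsTo
  have hchain (w : E) (hw : w ∈ s) : (‖fderiv ℝ (f ∘ φ) w‖₊ : ℝ≥0∞)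
      ≤ ‖fderiv ℝ f (φ w)‖₊ * ‖fderiv ℝ φ w‖₊ := by
    exact_mod_cast nnnorm_fderiv_comp_le
      ((hf.differentiableOn one_ne_zero _ (hbij.mapsTo hw)).differentiableAt
        (ht.mem_nhds (hbij.mapsTo hw)))
      ((hφ.differentiableOn one_ne_zero w hw).differentiableAt (hs.mem_nhds hw))
  have hJ0 : ∀ᵐ w ∂μ.restrict s, ENNReal.ofReal |(fderiv ℝ φ w).det| ≠ 0 :=
    (ae_restrict_iff' hms).2 (ae_of_all _ fun w hw => by simpa using hJ w hw)
  rw [← hbij.image_eq, lintegral_image_eq_lintegral_abs_det_fderiv_mul_of_isOpen μ hs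
    (hφ.differentiableOn one_ne_zero) hbij.injOn]
  calc (∫⁻ w in s, (‖fderiv ℝ (f ∘ φ) w‖₊ : ℝ≥0∞) ^ q ∂μ) ^ (1 / q)
      ≤ (∫⁻ w in s, ((‖fderiv ℝ f (φ w)‖₊ : ℝ≥0∞) * ‖fderiv ℝ φ w‖₊) ^ q ∂μ) ^ (1 / q) :=
        ENNReal.rpow_le_rpow (setLIntegral_mono' hms fun w hw =>
          ENNReal.rpow_le_rpow (hchain w hw) hq.le) (by positivity)
    _ ≤ _ := ENNReal.lintegral_mul_rpow_le_weighted hq hqp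
        ((ENNReal.continuous_coe.comp continuous_nnnorm).comp_continuousOn hDf |>.aemeasurable hms)
        ((ENNReal.continuous_coe.comp continuous_nnnorm).comp_continuousOn hDφ |>.aemeasurable hms)
        ((ENNReal.continuous_ofReal.comp (continuous_abs.comp
          ContinuousLinearMap.continuous_det)).comp_continuousOn hDφ |>.aemeasurable hms)
        hJ0 (ae_of_all _ fun _ => ENNReal.ofReal_ne_top)

end CompositionOperator

theorem diffeomorphism_composition_operator_bound_general
    (Ω' Ω : Set (EuclideanSpace ℝ (Fin 2))) (hΩ'o : IsOpen Ω') (hΩo : IsOpen Ω)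
    (φ : EuclideanSpace ℝ (Fin 2) → EuclideanSpace ℝ (Fin 2))
    (hbij : Set.BijOn φ Ω' Ω)
    (hφ : ContDiffOn ℝ 1 φ Ω')
    (hJ : ∀ w ∈ Ω', (fderiv ℝ φ w).det ≠ 0)
    (p q : ℝ) (hq1 : 1 ≤ q) (hqp : q < p)
    (K : ℝ≥0∞)
    (hK : K = (∫⁻ w in Ω',
        ((‖fderiv ℝ φ w‖₊ : ℝ≥0∞) ^ p / ENNReal.ofReal |(fderiv ℝ φ w).det|)
          ^ (q / (p - q))) ^ ((p - q) / (p * q)))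
    (f : EuclideanSpace ℝ (Fin 2) → ℝ) (hf : ContDiffOn ℝ 1 f Ω) :
    (∫⁻ w in Ω', (‖fderiv ℝ (f ∘ φ) w‖₊ : ℝ≥0∞) ^ q) ^ (1 / q)
      ≤ K * (∫⁻ x in Ω, (‖fderiv ℝ f x‖₊ : ℝ≥0∞) ^ p) ^ (1 / p) :=
  hK ▸ lintegral_nnnorm_fderiv_comp_rpow_le volume hΩ'o hΩo hbij hφ hJ hf
    (one_pos.trans_le hq1) hqp

theorem diffeomorphism_composition_operator_bound
    (Ω' Ω : Set (EuclideanSpace ℝ (Fin 2))) (hΩ'o : IsOpen Ω') (hΩo : IsOpen Ω)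
    (φ ψ : EuclideanSpace ℝ (Fin 2) → EuclideanSpace ℝ (Fin 2))
    (hbij : Set.BijOn φ Ω' Ω)
    (hφ : ContDiffOn ℝ 1 φ Ω') (hψ : ContDiffOn ℝ 1 ψ Ω)
    (hinv : Set.InvOn ψ φ Ω' Ω)
    (hJ : ∀ w ∈ Ω', (fderiv ℝ φ w).det ≠ 0)
    (p q : ℝ) (hq1 : 1 ≤ q) (hqp : q < p)
    (K : ℝ≥0∞)
    (hK : K = (∫⁻ w in Ω',
        ((‖fderiv ℝ φ w‖₊ : ℝ≥0∞) ^ p / ENNReal.ofReal |(fderiv ℝ φ w).det|)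
          ^ (q / (p - q))) ^ ((p - q) / (p * q)))
    (hKfin : K < ⊤)
    (f : EuclideanSpace ℝ (Fin 2) → ℝ) (hf : ContDiffOn ℝ 1 f Ω) :
    (∫⁻ w in Ω', (‖fderiv ℝ (f ∘ φ) w‖₊ : ℝ≥0∞) ^ q) ^ (1 / q)
      ≤ K * (∫⁻ x in Ω, (‖fderiv ℝ f x‖₊ : ℝ≥0∞) ^ p) ^ (1 / p) :=
  diffeomorphism_composition_operator_bound_general Ω' Ω hΩ'o hΩo φ hbij hφ hJ p q hq1 hqp K hK f hf
end

section
/- (Weighted Sobolev–Poincaré inequality.) Let Ω̃ and Ω be simply connected open subsets of ℂ with finite two-dimensional Lebesgue measure, let φ : Ω̃ → Ω be a holomorphic bijection, and let h(z) = |φ'(φ⁻¹(z))|⁻² be the conformal weight on Ω. Let p > 2, let 1 ≤ r < ∞ and 2r/(r+2) < q ≤ 2 with r ≤ 2q/(2-q) when q < 2, and assume Ω̃ is an (r,q)-Sobolev–Poincaré domain with constant A. Then for every smooth function f : ℂ → ℝ with compact support contained in Ω, (∫_{Ω} |f(z)|^r h(z) dA(z))^{1/r} ≤ A · |Ω̃|^{(2-q)/(2q)}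 · |Ω|^{(p-2)/(2p)} · (∫_{Ω} ‖∇f(z)‖^p dA(z))^{1/p}. -/
open MeasureTheory Real Set
open scoped ENNReal

/-- A domain `D ⊂ ℂ` is an `(r,q)`-Sobolev–Poincaré domain with constant `A` if
`(∫_D |g|^r)^{1/r} ≤ A (∫_D ‖∇g‖^q)^{1/q}` for all smooth `g` compactly supported in `D`. -/
def IsSobolevPoincareDomain (D : Set ℂ) (r q A : ℝ) : Prop :=
  ∀ g : ℂ → ℝ, ContDiff ℝ (⊤ : ℕ∞) g → HasCompactSupport g → tsupport g ⊆ D →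
    (∫⁻ w in D, (‖g w‖₊ : ℝ≥0∞) ^ r) ^ (1 / r)
      ≤ ENNReal.ofReal A * (∫⁻ w in D, (‖fderiv ℝ g w‖₊ : ℝ≥0∞) ^ q) ^ (1 / q)

lemma complex_mul_det (c : ℂ) :
    (((ContinuousLinearMap.smulRight (1 : ℂ →L[ℂ] ℂ) c).restrictScalars ℝ) : ℂ →L[ℝ] ℂ).det
      = Complex.normSq c := by
  rw [ContinuousLinearMap.det, ← LinearMap.det_toMatrix Complex.basisOneI, Matrix.det_fin_two]
  simp [LinearMap.toMatrix_apply, Complex.coe_basisOneI_repr, Complex.coe_basisOneI,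
    Complex.normSq_apply, Complex.mul_re, Complex.mul_im]

lemma lintegral_image_holomorphic {s : Set ℂ} (hs : MeasurableSet s)
    {φ φd : ℂ → ℂ} (hd : ∀ w ∈ s, HasDerivAt φ (φd w) w) (hinj : Set.InjOn φ s)
    (g : ℂ → ℝ≥0∞) :
    ∫⁻ z in φ '' s, g z = ∫⁻ w in s, (‖φd w‖₊ : ℝ≥0∞) ^ (2 : ℝ) * g (φ w) := by
  rw [lintegral_image_eq_lintegral_abs_det_fderiv_mul volume hs
    (fun w hw => (((hd w hw).hasFDerivAt).restrictScalars ℝ).hasFDerivWithinAt) hinj g]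
  refine setLIntegral_congr_fun hs (fun w hw => ?_)
  congr 1
  rw [show ContinuousLinearMap.toSpanSingleton ℂ (φd w)
      = ContinuousLinearMap.smulRight (1 : ℂ →L[ℂ] ℂ) (φd w) from by ext; simp, complex_mul_det, abs_of_nonneg (Complex.normSq_nonneg _)]
  rw [Complex.normSq_eq_norm_sq,
    ENNReal.ofReal_pow (norm_nonneg _), ofReal_norm, enorm_eq_nnnorm,
    ← ENNReal.rpow_natCast]
  norm_num

lemma lintegral_rpow_le_rpow_mul {α : Type*} [MeasurableSpace α] {μ : Measure α}
    {F : α → ℝ≥0∞} (hF : AEMeasurable F μ)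
    {a b : ℝ} (ha : 0 < a) (hab : a ≤ b) :
    ∫⁻ w, F w ^ a ∂μ ≤ (∫⁻ w, F w ^ b ∂μ) ^ (a / b) * μ Set.univ ^ ((b - a) / b) := by
  rcases eq_or_lt_of_le hab with rfl | hlt
  · simp [div_self ha.ne']
  · have hb : 0 < b := ha.trans hlt
    have hpq : Real.HolderConjugate (b / a) (b / (b - a)) := by
      rw [Real.holderConjugate_iff]
      constructor
      · rw [lt_div_iff₀ ha]; linarith
      · rw [inv_div, inv_div]; field_simp; ring
    have hmeas : AEMeasurable (fun w => F w ^ a) μ := hF.pow aemeasurable_const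
    have H := ENNReal.lintegral_mul_le_Lp_mul_Lq μ hpq hmeas
      (aemeasurable_const (b := (1 : ℝ≥0∞)))
    simp only [Pi.mul_apply, mul_one, ENNReal.one_rpow, lintegral_const, one_mul] at H
    calc ∫⁻ w, F w ^ a ∂μ
        ≤ (∫⁻ w, (F w ^ a) ^ (b / a) ∂μ) ^ (1 / (b / a)) * (μ Set.univ) ^ (1 / (b / (b - a))) := H
      _ = (∫⁻ w, F w ^ b ∂μ) ^ (a / b) * μ Set.univ ^ ((b - a) / b) := by
          rw [one_div_div, one_div_div]
          congr 2
          refine lintegral_congr fun w => ?_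
          rw [← ENNReal.rpow_mul]
          congr 1
          field_simp

theorem weighted_sobolev_poincare
    (Ω' Ω : Set ℂ) (hΩ'o : IsOpen Ω') (hΩo : IsOpen Ω)
    (hΩ'sc : SimplyConnectedSpace ↥Ω') (hΩsc : SimplyConnectedSpace ↥Ω)
    (hΩ'fin : volume Ω' < ⊤) (hΩfin : volume Ω < ⊤)
    (φ ψ : ℂ → ℂ) (φ' : ℂ → ℂ)
    (hholo : ∀ w ∈ Ω', HasDerivAt φ (φ' w) w)
    (hbij : Set.BijOn φ Ω' Ω)
    (hinv : Set.InvOn ψ φ Ω' Ω)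
    (h : ℂ → ℝ≥0∞)
    (hh : ∀ z ∈ Ω, h z = ((‖φ' (ψ z)‖₊ : ℝ≥0∞) ^ (2 : ℝ))⁻¹)
    (p r q A : ℝ) (hp : 2 < p) (hr : 1 ≤ r)
    (hq1 : 2 * r / (r + 2) < q) (hq2 : q ≤ 2)
    (hrq : q < 2 → r ≤ 2 * q / (2 - q))
    (hSP : IsSobolevPoincareDomain Ω' r q A)
    (f : ℂ → ℝ) (hf : ContDiff ℝ (⊤ : ℕ∞) f) (hfc : HasCompactSupport f)
    (hfs : tsupport f ⊆ Ω) :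
    (∫⁻ z in Ω, (‖f z‖₊ : ℝ≥0∞) ^ r * h z) ^ (1 / r)
      ≤ ENNReal.ofReal A * volume Ω' ^ ((2 - q) / (2 * q))
          * volume Ω ^ ((p - 2) / (2 * p))
          * (∫⁻ z in Ω, (‖fderiv ℝ f z‖₊ : ℝ≥0∞) ^ p) ^ (1 / p) := by
  have hr0 : (0:ℝ) < r := lt_of_lt_of_le one_pos hr
  have hq0 : (0:ℝ) < q := lt_of_le_of_lt (by positivity) hq1
  have hp0 : (0:ℝ) < p := lt_trans two_pos hp
  have hΩeq : Ω = φ '' Ω' := hbij.image_eq.symm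
  by_cases hemp : Ω' = ∅
  · have : Ω = ∅ := by rw [hΩeq, hemp, image_empty]
    rw [this]
    simp only [Measure.restrict_empty, lintegral_zero_measure]
    rw [ENNReal.zero_rpow_of_pos (by positivity)]
    exact bot_le
  obtain ⟨w₀, hw₀⟩ := nonempty_iff_ne_empty.2 hemp
  -- preconnectedness of Ω'
  have hconn : IsPreconnected Ω' := by
    haveI : PathConnectedSpace ↥Ω' := inferInstance
    exact isPreconnected_iff_preconnectedSpace.2 inferInstance
  have hdiff : DifferentiableOn ℂ φ Ω' := fun w hw =>
    ((hholo w hw).differentiableAt).differentiableWithinAt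
  have han : AnalyticOnNhd ℂ φ Ω' := hdiff.analyticOnNhd hΩ'o
  have hopen : ∀ s ⊆ Ω', IsOpen s → IsOpen (φ '' s) := by
    rcases han.is_constant_or_isOpen hconn with ⟨c, hc⟩ | hopen
    · exfalso
      have hpos : 0 < volume Ω' := hΩ'o.measure_pos volume ⟨w₀, hw₀⟩
      have hsub : Ω' ⊆ {w₀} := fun x hx => by
        have : φ x = φ w₀ := by rw [hc x hx, hc w₀ hw₀]
        exact hbij.injOn hx hw₀ this
      have : volume Ω' ≤ volume ({w₀} : Set ℂ) := measure_mono hsub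
      simp [measure_singleton] at this
      exact hpos.ne' this
    · exact hopen
  have hψ : ∀ z ∈ Ω, ψ z ∈ Ω' ∧ φ (ψ z) = z := by
    intro z hz
    obtain ⟨w, hw, rfl⟩ := hbij.surjOn hz
    rw [hinv.1 hw]
    exact ⟨hw, rfl⟩
  -- continuity of the inverse
  have hψc : ContinuousOn ψ Ω := by
    rw [continuousOn_iff']
    intro t ht
    refine ⟨φ '' (Ω' ∩ t), hopen _ inter_subset_left (hΩ'o.inter ht), ?_⟩
    ext z
    constructor
    · rintro ⟨hzt, hzΩ⟩
      exact ⟨⟨ψ z, ⟨(hψ z hzΩ).1, hzt⟩, (hψ z hzΩ).2⟩, hzΩ⟩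
    · rintro ⟨⟨w, ⟨hw, hwt⟩, rfl⟩, hzΩ⟩
      exact ⟨show ψ (φ w) ∈ t by rw [hinv.1 hw]; exact hwt, hzΩ⟩
  set K' : Set ℂ := ψ '' tsupport f with hK'
  have hK'cpt : IsCompact K' := hfc.image_of_continuousOn (hψc.mono hfs)
  have hK'sub : K' ⊆ Ω' := by
    rintro w ⟨z, hz, rfl⟩
    exact (hψ z (hfs hz)).1
  set g : ℂ → ℝ := Ω'.indicator (fun w => f (φ w)) with hgdef
  have hgΩ' : ∀ w ∈ Ω', g w = f (φ w) := fun w hw => indicator_of_mem hw _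
  have hg0 : ∀ w, w ∉ K' → g w = 0 := by
    intro w hw
    by_cases hwΩ : w ∈ Ω'
    · rw [hgΩ' w hwΩ]
      by_contra hne
      exact hw ⟨φ w, subset_tsupport f hne, hinv.1 hwΩ⟩
    · exact indicator_of_notMem hwΩ _
  have hφC : ContDiffOn ℝ (⊤ : ℕ∞) φ Ω' := (hdiff.contDiffOn hΩ'o).restrict_scalars ℝ
  have hfφ : ContDiffOn ℝ (⊤ : ℕ∞) (fun w => f (φ w)) Ω' := hf.comp_contDiffOn hφC
  have hgsmooth : ContDiff ℝ (⊤ : ℕ∞) g := by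
    rw [contDiff_iff_contDiffAt]
    intro w
    by_cases hw : w ∈ Ω'
    · refine ((hfφ w hw).contDiffAt (hΩ'o.mem_nhds hw)).congr_of_eventuallyEq ?_
      exact Filter.eventuallyEq_of_mem (hΩ'o.mem_nhds hw) (fun x hx => hgΩ' x hx)
    · have hw' : w ∈ K'ᶜ := fun hmem => hw (hK'sub hmem)
      refine (contDiffAt_const (c := (0:ℝ))).congr_of_eventuallyEq ?_
      exact Filter.eventuallyEq_of_mem (hK'cpt.isClosed.isOpen_compl.mem_nhds hw')
        (fun x hx => hg0 x hx)
  have hgc : HasCompactSupport g := HasCompactSupport.intro hK'cpt hg0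
  have hsupp : Function.support g ⊆ K' := fun w hw =>
    by_contra fun hmem => hw (hg0 w hmem)
  have hgs : tsupport g ⊆ Ω' :=
    (closure_minimal hsupp hK'cpt.isClosed).trans hK'sub
  -- derivative bound
  have hDg : ∀ w ∈ Ω', (‖fderiv ℝ g w‖₊ : ℝ≥0∞)
      ≤ (‖fderiv ℝ f (φ w)‖₊ : ℝ≥0∞) * (‖φ' w‖₊ : ℝ≥0∞) := by
    intro w hw
    set Dw : ℂ →L[ℝ] ℂ :=
      (ContinuousLinearMap.smulRight (1 : ℂ →L[ℂ] ℂ) (φ' w)).restrictScalars ℝ with hDw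
    have hDφ : HasFDerivAt φ Dw w := ((hholo w hw).hasFDerivAt).restrictScalars ℝ
    have hcomp : HasFDerivAt (fun x => f (φ x)) ((fderiv ℝ f (φ w)).comp Dw) w :=
      ((hf.differentiable (by simp) (φ w)).hasFDerivAt).comp w hDφ
    have hev : g =ᶠ[nhds w] fun x => f (φ x) :=
      Filter.eventuallyEq_of_mem (hΩ'o.mem_nhds hw) (fun x hx => hgΩ' x hx)
    rw [hev.fderiv_eq, hcomp.fderiv]
    have hnorm : ‖Dw‖₊ = ‖φ' w‖₊ := by
      have : ‖Dw‖ = ‖φ' w‖ := by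
        rw [hDw, ContinuousLinearMap.norm_restrictScalars,
          ContinuousLinearMap.norm_smulRight_apply, ContinuousLinearMap.one_def,
          ContinuousLinearMap.norm_id, one_mul]
      exact NNReal.eq (by rw [coe_nnnorm, coe_nnnorm]; exact this)
    refine le_trans (ENNReal.coe_le_coe.2
      (ContinuousLinearMap.opNNNorm_comp_le (fderiv ℝ f (φ w)) Dw)) ?_
    rw [ENNReal.coe_mul, hnorm]
  -- F : transported gradient
  set F : ℂ → ℝ≥0∞ := fun w => (‖fderiv ℝ f (φ w)‖₊ : ℝ≥0∞) * (‖φ' w‖₊ : ℝ≥0∞) with hF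
  -- Step 1 : change of variables for the LHS
  have h1 : (∫⁻ z in Ω, (‖f z‖₊ : ℝ≥0∞) ^ r * h z)
      ≤ ∫⁻ w in Ω', (‖g w‖₊ : ℝ≥0∞) ^ r := by
    rw [hΩeq, lintegral_image_holomorphic hΩ'o.measurableSet hholo hbij.injOn]
    refine setLIntegral_mono' hΩ'o.measurableSet (fun w hw => ?_)
    rw [hh (φ w) (hbij.mapsTo hw), hinv.1 hw, hgΩ' w hw]
    calc (‖φ' w‖₊ : ℝ≥0∞) ^ (2:ℝ) * ((‖f (φ w)‖₊ : ℝ≥0∞) ^ r * ((‖φ' w‖₊ : ℝ≥0∞) ^ (2:ℝ))⁻¹)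
        = (‖f (φ w)‖₊ : ℝ≥0∞) ^ r * ((‖φ' w‖₊ : ℝ≥0∞) ^ (2:ℝ) * ((‖φ' w‖₊ : ℝ≥0∞) ^ (2:ℝ))⁻¹) := by
          ring
      _ ≤ (‖f (φ w)‖₊ : ℝ≥0∞) ^ r * 1 := mul_le_mul_right (ENNReal.mul_inv_le_one _) _
      _ = (‖f (φ w)‖₊ : ℝ≥0∞) ^ r := mul_one _
  -- Step 2 : Sobolev–Poincaré on Ω'
  have h2 := hSP g hgsmooth hgc hgs
  -- Step 3 : bound the gradient integral
  have h3 : (∫⁻ w in Ω', (‖fderiv ℝ g w‖₊ : ℝ≥0∞) ^ q) ≤ ∫⁻ w in Ω', F w ^ q :=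
    setLIntegral_mono' hΩ'o.measurableSet (fun w hw =>
      ENNReal.rpow_le_rpow (hDg w hw) hq0.le)
  -- measurability of F
  have hfd : Continuous (fderiv ℝ f) := hf.continuous_fderiv (by simp)
  have hφcont : ContinuousOn φ Ω' := fun w hw => ((hholo w hw).continuousAt).continuousWithinAt
  have hdcont : ContinuousOn (deriv φ) Ω' := (han.deriv).continuousOn
  have hFmeas : AEMeasurable F (volume.restrict Ω') := by
    have h1' : AEMeasurable (fun w => (‖fderiv ℝ f (φ w)‖₊ : ℝ≥0∞) * (‖deriv φ w‖₊ : ℝ≥0∞))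
        (volume.restrict Ω') := by
      have ha : AEMeasurable (fun w => fderiv ℝ f (φ w)) (volume.restrict Ω') :=
        ((hfd.comp_continuousOn hφcont).aemeasurable hΩ'o.measurableSet)
      have hb : AEMeasurable (deriv φ) (volume.restrict Ω') :=
        hdcont.aemeasurable hΩ'o.measurableSet
      exact (ha.nnnorm.coe_nnreal_ennreal).mul (hb.nnnorm.coe_nnreal_ennreal)
    refine h1'.congr ?_
    rw [Filter.EventuallyEq, ae_restrict_iff' hΩ'o.measurableSet]
    exact Filter.Eventually.of_forall fun w hw => by rw [hF]; simp [(hholo w hw).deriv]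
  -- Step 4 : Hölder on Ω'
  have h4 : (∫⁻ w in Ω', F w ^ q)
      ≤ (∫⁻ w in Ω', F w ^ (2:ℝ)) ^ (q / 2) * (volume Ω') ^ ((2 - q) / 2) := by
    have := lintegral_rpow_le_rpow_mul hFmeas hq0 hq2
    rwa [Measure.restrict_apply_univ] at this
  -- Step 5 : change of variables back
  have h5 : (∫⁻ w in Ω', F w ^ (2:ℝ)) = ∫⁻ z in Ω, (‖fderiv ℝ f z‖₊ : ℝ≥0∞) ^ (2:ℝ) := by
    rw [hΩeq, lintegral_image_holomorphic hΩ'o.measurableSet hholo hbij.injOn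
      (fun z => (‖fderiv ℝ f z‖₊ : ℝ≥0∞) ^ (2:ℝ))]
    refine (setLIntegral_congr_fun hΩ'o.measurableSet
      (fun w hw => ?_)).symm
    rw [hF]
    rw [ENNReal.mul_rpow_of_nonneg _ _ (by norm_num : (0:ℝ) ≤ 2)]
    ring
  -- Step 6 : Hölder on Ω
  have hF2meas : AEMeasurable (fun z => (‖fderiv ℝ f z‖₊ : ℝ≥0∞)) (volume.restrict Ω) :=
    (hfd.nnnorm.measurable.coe_nnreal_ennreal).aemeasurable
  have h6 : (∫⁻ z in Ω, (‖fderiv ℝ f z‖₊ : ℝ≥0∞) ^ (2:ℝ))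
      ≤ (∫⁻ z in Ω, (‖fderiv ℝ f z‖₊ : ℝ≥0∞) ^ p) ^ (2 / p) * (volume Ω) ^ ((p - 2) / p) := by
    have := lintegral_rpow_le_rpow_mul hF2meas two_pos hp.le
    rwa [Measure.restrict_apply_univ] at this
  -- Assemble
  set I : ℝ≥0∞ := ∫⁻ z in Ω, (‖fderiv ℝ f z‖₊ : ℝ≥0∞) ^ p with hI
  calc (∫⁻ z in Ω, (‖f z‖₊ : ℝ≥0∞) ^ r * h z) ^ (1 / r)
      ≤ (∫⁻ w in Ω', (‖g w‖₊ : ℝ≥0∞) ^ r) ^ (1 / r) :=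
        ENNReal.rpow_le_rpow h1 (by positivity)
    _ ≤ ENNReal.ofReal A * (∫⁻ w in Ω', (‖fderiv ℝ g w‖₊ : ℝ≥0∞) ^ q) ^ (1 / q) := h2
    _ ≤ ENNReal.ofReal A * (∫⁻ w in Ω', F w ^ q) ^ (1 / q) :=
        mul_le_mul_right (ENNReal.rpow_le_rpow h3 (by positivity)) _
    _ ≤ ENNReal.ofReal A *
        ((∫⁻ w in Ω', F w ^ (2:ℝ)) ^ (q / 2) * (volume Ω') ^ ((2 - q) / 2)) ^ (1 / q) :=
        mul_le_mul_right (ENNReal.rpow_le_rpow h4 (by positivity)) _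
    _ = ENNReal.ofReal A *
        ((∫⁻ z in Ω, (‖fderiv ℝ f z‖₊ : ℝ≥0∞) ^ (2:ℝ)) ^ (q / 2)
          * (volume Ω') ^ ((2 - q) / 2)) ^ (1 / q) := by rw [h5]
    _ ≤ ENNReal.ofReal A *
        ((I ^ (2 / p) * (volume Ω) ^ ((p - 2) / p)) ^ (q / 2)
          * (volume Ω') ^ ((2 - q) / 2)) ^ (1 / q) := by
        refine mul_le_mul_right (ENNReal.rpow_le_rpow (mul_le_mul_left
          (ENNReal.rpow_le_rpow h6 (by positivity)) _) (by positivity)) _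
    _ = ENNReal.ofReal A * volume Ω' ^ ((2 - q) / (2 * q))
          * volume Ω ^ ((p - 2) / (2 * p)) * I ^ (1 / p) := by
        rw [ENNReal.mul_rpow_of_nonneg _ _ (by positivity : (0:ℝ) ≤ q / 2),
          ENNReal.mul_rpow_of_nonneg _ _ (by positivity : (0:ℝ) ≤ 1 / q),
          ENNReal.mul_rpow_of_nonneg _ _ (by positivity : (0:ℝ) ≤ 1 / q),
          ← ENNReal.rpow_mul, ← ENNReal.rpow_mul, ← ENNReal.rpow_mul,
          ← ENNReal.rpow_mul, ← ENNReal.rpow_mul]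
        have hpne : p ≠ 0 := hp0.ne'
        have hqne : q ≠ 0 := hq0.ne'
        have e1 : 2 / p * (q / 2 * (1 / q)) = 1 / p := by field_simp
        have e2 : (p - 2) / p * (q / 2 * (1 / q)) = (p - 2) / (2 * p) := by
          field_simp
        have e3 : (2 - q) / 2 * (1 / q) = (2 - q) / (2 * q) := by
          rw [div_mul_div_comm, mul_one]
        rw [e1, e2, e3]
        ring
end

section
/- (Sobolev–Poincaré inequality in conformal regular domains.) Let Ω̃ and Ω be simply connected open subsets of ℂ with finite two-dimensional Lebesgue measure, let φ : Ω̃ → Ω be a holomorphic bijection, let α > 1 with ∫_{Ω̃} |φ'(w)|^{2α} dA(w) < ∞, and let p > 2. Let s ≥ 1, set r = sα/(α-1), let q satisfy 2r/(r+2) < q ≤ 2 and s ≤ (2q/(2-q))·((α-1)/α) when q < 2, and assume Ω̃ is an (r,q)-Sobolev–Poincaré domain with constant A. Then for every smooth function f : ℂ → ℝ with compact support contained in Ω, (∫_{Ω} |f(z)|^s dA(z))^{1/s} ≤ A · |Ω̃|^{(2-q)/(2q)} · |Ω|^{(p-2)/(2p)} · (∫_{Ω̃} |φ'(w)|^{2α}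 dA(w))^{1/(αs)} · (∫_{Ω} ‖∇f(z)‖^p dA(z))^{1/p}. -/
open MeasureTheory Real Set
open scoped ENNReal

lemma det_mul_complex (c : ℂ) :
    (((1 : ℂ →L[ℂ] ℂ).smulRight c).restrictScalars ℝ).det = Complex.normSq c := by
  have h : ((((1 : ℂ →L[ℂ] ℂ).smulRight c).restrictScalars ℝ : ℂ →L[ℝ] ℂ) : ℂ →ₗ[ℝ] ℂ)
      = Algebra.lmul ℝ ℂ c := by
    ext z
    simp [mul_comm]
  rw [ContinuousLinearMap.det, h, ← Algebra.norm_apply]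
  exact Algebra.norm_complex_apply c

lemma ofReal_det_eq (c : ℂ) :
    ENNReal.ofReal |(((1 : ℂ →L[ℂ] ℂ).smulRight c).restrictScalars ℝ).det|
      = (‖c‖₊ : ℝ≥0∞) ^ (2 : ℝ) := by
  rw [det_mul_complex, abs_of_nonneg (Complex.normSq_nonneg c)]
  rw [Complex.normSq_eq_norm_sq, ENNReal.ofReal_pow (norm_nonneg c),
    ofReal_norm, enorm_eq_nnnorm, ← ENNReal.rpow_natCast]
  norm_num

theorem sobolev_poincare_conformal_regular
    (Ω' Ω : Set ℂ) (hΩ'o : IsOpen Ω') (hΩo : IsOpen Ω)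
    (hΩ'sc : SimplyConnectedSpace ↥Ω') (hΩsc : SimplyConnectedSpace ↥Ω)
    (hΩ'fin : volume Ω' < ⊤) (hΩfin : volume Ω < ⊤)
    (φ : ℂ → ℂ) (φ' : ℂ → ℂ)
    (hholo : ∀ w ∈ Ω', HasDerivAt φ (φ' w) w)
    (hbij : Set.BijOn φ Ω' Ω)
    (α : ℝ) (hα : 1 < α)
    (hreg : ∫⁻ w in Ω', (‖φ' w‖₊ : ℝ≥0∞) ^ (2 * α) < ⊤)
    (p s r q A : ℝ) (hp : 2 < p) (hs : 1 ≤ s) (hr : r = s * α / (α - 1))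
    (hq1 : 2 * r / (r + 2) < q) (hq2 : q ≤ 2)
    (hsq : q < 2 → s ≤ 2 * q / (2 - q) * ((α - 1) / α))
    (hSP : IsSobolevPoincareDomain Ω' r q A)
    (f : ℂ → ℝ) (hf : ContDiff ℝ (⊤ : ℕ∞) f) (hfc : HasCompactSupport f)
    (hfs : tsupport f ⊆ Ω) :
    (∫⁻ z in Ω, (‖f z‖₊ : ℝ≥0∞) ^ s) ^ (1 / s)
      ≤ ENNReal.ofReal A * volume Ω' ^ ((2 - q) / (2 * q))
          * volume Ω ^ ((p - 2) / (2 * p))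
          * (∫⁻ w in Ω', (‖φ' w‖₊ : ℝ≥0∞) ^ (2 * α)) ^ (1 / (α * s))
          * (∫⁻ z in Ω, (‖fderiv ℝ f z‖₊ : ℝ≥0∞) ^ p) ^ (1 / p) := by
  -- positivity of exponents
  have hα0 : (0:ℝ) < α := lt_trans one_pos hα
  have hα1 : (0:ℝ) < α - 1 := by linarith
  have hs0 : (0:ℝ) < s := lt_of_lt_of_le one_pos hs
  have hr0 : (0:ℝ) < r := by rw [hr]; positivity
  have hq0 : (0:ℝ) < q := lt_trans (by positivity) hq1
  have hp0 : (0:ℝ) < p := by linarith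
  -- analyticity and open mapping
  have hφd : DifferentiableOn ℂ φ Ω' :=
    fun w hw => (hholo w hw).differentiableAt.differentiableWithinAt
  have han : AnalyticOnNhd ℂ φ Ω' := hφd.analyticOnNhd hΩ'o
  have hne : Ω'.Nonempty := by
    have h1 : Nonempty ↥Ω' := (inferInstance : PathConnectedSpace ↥Ω').nonempty
    obtain ⟨⟨z, hz⟩⟩ := h1
    exact ⟨z, hz⟩
  have hpre : IsPreconnected Ω' := by
    rw [isPreconnected_iff_preconnectedSpace]
    infer_instance
  have hopenmap : ∀ u ⊆ Ω', IsOpen u → IsOpen (φ '' u) := by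
    rcases han.is_constant_or_isOpen hpre with ⟨w₀, hw₀⟩ | h
    · exfalso
      obtain ⟨z₀, hz₀⟩ := hne
      obtain ⟨ε, hε, hball⟩ := Metric.isOpen_iff.mp hΩ'o z₀ hz₀
      have hz₁ : z₀ + (ε/2 : ℝ) ∈ Ω' := by
        apply hball
        rw [Metric.mem_ball, Complex.dist_eq]
        simp only [add_sub_cancel_left]
        rw [Complex.norm_real, Real.norm_eq_abs, abs_of_pos (by linarith)]
        linarith
      have : z₀ + (ε/2 : ℝ) = z₀ :=
        hbij.injOn hz₁ hz₀ (by rw [hw₀ _ hz₁, hw₀ _ hz₀])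
      have h2 : ((ε/2 : ℝ) : ℂ) = 0 := by linear_combination this
      rw [Complex.ofReal_eq_zero] at h2
      linarith
    · exact h
  -- the inverse map
  set ψ : ℂ → ℂ := Function.invFunOn φ Ω' with hψdef
  have hinv : InvOn ψ φ Ω' Ω := hbij.invOn_invFunOn
  have hψmaps : MapsTo ψ Ω Ω' := hbij.surjOn.mapsTo_invFunOn
  have hψc : ContinuousOn ψ Ω := by
    rw [continuousOn_iff]
    intro z hz t ht hψz
    refine ⟨φ '' (t ∩ Ω'), hopenmap _ inter_subset_right (ht.inter hΩ'o), ?_, ?_⟩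
    · exact ⟨ψ z, ⟨hψz, hψmaps hz⟩, hinv.2 hz⟩
    · rintro x ⟨⟨w, ⟨hwt, hwΩ'⟩, rfl⟩, hxΩ⟩
      have hww : ψ (φ w) = w := hinv.1 hwΩ'
      simpa [mem_preimage, hww] using hwt
  -- the compact set that supports g
  set K : Set ℂ := ψ '' (tsupport f) with hKdef
  have hKc : IsCompact K := (hfc : IsCompact (tsupport f)).image_of_continuousOn (hψc.mono hfs)
  have hKΩ' : K ⊆ Ω' := by
    rintro x ⟨z, hz, rfl⟩
    exact hψmaps (hfs hz)
  -- the test function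
  set g : ℂ → ℝ := Ω'.indicator (fun w => f (φ w)) with hgdef
  have hgΩ' : ∀ w ∈ Ω', g w = f (φ w) := fun w hw => indicator_of_mem hw _
  have hg0 : ∀ w ∉ K, g w = 0 := by
    intro w hw
    by_cases hwΩ : w ∈ Ω'
    · rw [hgΩ' w hwΩ]
      by_contra hne0
      have hsupp : φ w ∈ tsupport f := subset_tsupport f hne0
      exact hw ⟨φ w, hsupp, hinv.1 hwΩ⟩
    · exact indicator_of_notMem hwΩ _
  have hsg : tsupport g ⊆ K :=
    closure_minimal (fun w hw => by_contra fun h => hw (hg0 w h)) hKc.isClosed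
  have hgsupp : HasCompactSupport g := hKc.of_isClosed_subset isClosed_closure hsg
  have hsgΩ' : tsupport g ⊆ Ω' := hsg.trans hKΩ'
  have hgsm : ContDiff ℝ (⊤ : ℕ∞) g := by
    rw [contDiff_iff_contDiffAt]
    intro w
    by_cases hw : w ∈ Ω'
    · have hφsm : ContDiffAt ℝ (⊤ : ℕ∞) φ w := ((han w hw).contDiffAt).restrict_scalars ℝ
      have h1 : ContDiffAt ℝ (⊤ : ℕ∞) (fun x => f (φ x)) w := (hf.contDiffAt).comp w hφsm
      exact h1.congr_of_eventuallyEq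
        (Filter.eventually_of_mem (hΩ'o.mem_nhds hw) fun x hx => hgΩ' x hx)
    · have hw' : w ∈ Kᶜ := fun h => hw (hKΩ' h)
      exact contDiffAt_const.congr_of_eventuallyEq
        (Filter.eventually_of_mem (hKc.isClosed.isOpen_compl.mem_nhds hw') fun x hx => hg0 x hx)
  -- derivative bound for g
  have hDg : ∀ w ∈ Ω', (‖fderiv ℝ g w‖₊ : ℝ≥0∞)
      ≤ (‖fderiv ℝ f (φ w)‖₊ : ℝ≥0∞) * (‖φ' w‖₊ : ℝ≥0∞) := by
    intro w hw
    have hev : g =ᶠ[nhds w] fun x => f (φ x) :=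
      Filter.eventually_of_mem (hΩ'o.mem_nhds hw) fun x hx => hgΩ' x hx
    have hφf : HasFDerivAt φ (((1 : ℂ →L[ℂ] ℂ).smulRight (φ' w)).restrictScalars ℝ) w :=
      ((hholo w hw).hasFDerivAt).restrictScalars ℝ
    have hcomp : HasFDerivAt (fun x => f (φ x))
        ((fderiv ℝ f (φ w)).comp (((1 : ℂ →L[ℂ] ℂ).smulRight (φ' w)).restrictScalars ℝ)) w :=
      (((hf.differentiable (by simp)) (φ w)).hasFDerivAt).comp w hφf
    rw [hev.fderiv_eq, hcomp.fderiv]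
    have hnorm : ‖((1 : ℂ →L[ℂ] ℂ).smulRight (φ' w)).restrictScalars ℝ‖₊ = ‖φ' w‖₊ := by
      apply NNReal.coe_injective
      simp only [coe_nnnorm, ContinuousLinearMap.norm_restrictScalars,
        ContinuousLinearMap.norm_smulRight_apply]
      rw [ContinuousLinearMap.one_def, ContinuousLinearMap.norm_id, one_mul]
    refine le_trans (ENNReal.coe_le_coe.mpr (ContinuousLinearMap.opNNNorm_comp_le _ _)) ?_
    rw [ENNReal.coe_mul, hnorm]
  -- change of variables
  have hCoV : ∀ G : ℂ → ℝ≥0∞,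
      ∫⁻ z in Ω, G z = ∫⁻ w in Ω', (‖φ' w‖₊ : ℝ≥0∞) ^ (2:ℝ) * G (φ w) := by
    intro G
    have h := lintegral_image_eq_lintegral_abs_det_fderiv_mul volume hΩ'o.measurableSet
      (f' := fun w => ((1 : ℂ →L[ℂ] ℂ).smulRight (φ' w)).restrictScalars ℝ)
      (fun w hw => (((hholo w hw).hasFDerivAt).restrictScalars ℝ).hasFDerivWithinAt)
      hbij.injOn G
    rw [hbij.image_eq] at h
    rw [h]
    exact lintegral_congr fun w => by rw [ofReal_det_eq]
  -- measurability
  have hmφ' : AEMeasurable (fun w => (‖φ' w‖₊ : ℝ≥0∞)) (volume.restrict Ω') := by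
    have h1 : ∀ᵐ w ∂(volume.restrict Ω'), (‖deriv φ w‖₊ : ℝ≥0∞) = (‖φ' w‖₊ : ℝ≥0∞) :=
      (ae_restrict_mem hΩ'o.measurableSet).mono fun w hw => by rw [(hholo w hw).deriv]
    exact ((measurable_deriv φ).nnnorm.coe_nnreal_ennreal).aemeasurable.congr h1
  have hmg : Measurable fun w => (‖g w‖₊ : ℝ≥0∞) :=
    (hgsm.continuous.measurable).nnnorm.coe_nnreal_ennreal
  have hmDf : Measurable fun z => (‖fderiv ℝ f z‖₊ : ℝ≥0∞) :=
    ((hf.continuous_fderiv (by simp)).measurable).nnnorm.coe_nnreal_ennreal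
  have hφcont : ContinuousOn φ Ω' := fun w hw => (hholo w hw).continuousAt.continuousWithinAt
  have hmDfφ : AEMeasurable (fun w => (‖fderiv ℝ f (φ w)‖₊ : ℝ≥0∞)) (volume.restrict Ω') :=
    hmDf.comp_aemeasurable (hφcont.aemeasurable hΩ'o.measurableSet)
  have rpowm : ∀ {δ : Set ℂ} {h : ℂ → ℝ≥0∞}, AEMeasurable h (volume.restrict δ) → ∀ c : ℝ,
      AEMeasurable (fun w => h w ^ c) (volume.restrict δ) := fun hm c =>
    ENNReal.continuous_rpow_const.measurable.comp_aemeasurable hm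
  -- abbreviations
  set Y := ∫⁻ w in Ω', (‖φ' w‖₊ : ℝ≥0∞) ^ (2 * α) with hYdef
  set X := ∫⁻ w in Ω', (‖g w‖₊ : ℝ≥0∞) ^ r with hXdef
  set Zq := ∫⁻ w in Ω', (‖fderiv ℝ g w‖₊ : ℝ≥0∞) ^ q with hZdef
  set W := ∫⁻ z in Ω, (‖fderiv ℝ f z‖₊ : ℝ≥0∞) ^ (2:ℝ) with hWdef
  set P := ∫⁻ z in Ω, (‖fderiv ℝ f z‖₊ : ℝ≥0∞) ^ p with hPdef
  -- Step 1 : Hölder after change of variables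
  have step1 : (∫⁻ z in Ω, (‖f z‖₊ : ℝ≥0∞) ^ s) ≤ X ^ ((α-1)/α) * Y ^ (1/α) := by
    have h1 : (∫⁻ z in Ω, (‖f z‖₊ : ℝ≥0∞) ^ s)
        = ∫⁻ w in Ω', ((fun w => (‖g w‖₊ : ℝ≥0∞) ^ s) *
            (fun w => (‖φ' w‖₊ : ℝ≥0∞) ^ (2:ℝ))) w := by
      rw [hCoV (fun z => (‖f z‖₊ : ℝ≥0∞) ^ s)]
      refine setLIntegral_congr_fun hΩ'o.measurableSet (
        fun w hw => ?_)
      simp only [Pi.mul_apply]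
      rw [hgΩ' w hw, mul_comm]
    rw [h1]
    have hpq : Real.HolderConjugate (α/(α-1)) α :=
      Real.holderConjugate_iff.mpr ⟨(one_lt_div hα1).mpr (by linarith), by field_simp; ring⟩
    refine (ENNReal.lintegral_mul_le_Lp_mul_Lq (volume.restrict Ω') hpq
      (rpowm hmg.aemeasurable s) (rpowm hmφ' 2)).trans (le_of_eq ?_)
    congr 1
    · rw [one_div_div]
      congr 1
      refine lintegral_congr fun w => ?_
      rw [← ENNReal.rpow_mul]
      congr 1
      rw [hr, mul_div_assoc]
    · congr 1
      exact lintegral_congr fun w => by rw [← ENNReal.rpow_mul]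
  have step1' : (∫⁻ z in Ω, (‖f z‖₊ : ℝ≥0∞) ^ s) ^ (1/s) ≤ X ^ (1/r) * Y ^ (1/(α*s)) := by
    have h2 := ENNReal.rpow_le_rpow step1 (by positivity : (0:ℝ) ≤ 1/s)
    rw [ENNReal.mul_rpow_of_nonneg _ _ (by positivity), ← ENNReal.rpow_mul,
      ← ENNReal.rpow_mul] at h2
    have e1 : (α-1)/α * (1/s) = 1/r := by
      rw [hr]
      field_simp [hα1.ne', hα0.ne', hs0.ne']
    have e2 : 1/α * (1/s) = 1/(α*s) := by rw [div_mul_div_comm, one_mul]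
    rwa [e1, e2] at h2
  -- Step 2 : the Sobolev–Poincaré hypothesis
  have step2 : X ^ (1/r) ≤ ENNReal.ofReal A * Zq ^ (1/q) := hSP g hgsm hgsupp hsgΩ'
  -- Step 3 : pointwise bound then Hölder in q
  have step3 : Zq ≤ ∫⁻ w in Ω',
      ((‖fderiv ℝ f (φ w)‖₊ : ℝ≥0∞) * (‖φ' w‖₊ : ℝ≥0∞)) ^ q := by
    refine lintegral_mono_ae ((ae_restrict_mem hΩ'o.measurableSet).mono fun w hw => ?_)
    exact ENNReal.rpow_le_rpow (hDg w hw) hq0.le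
  have step4 : (∫⁻ w in Ω',
      ((‖fderiv ℝ f (φ w)‖₊ : ℝ≥0∞) * (‖φ' w‖₊ : ℝ≥0∞)) ^ (2:ℝ)) = W := by
    rw [hWdef, hCoV (fun z => (‖fderiv ℝ f z‖₊ : ℝ≥0∞) ^ (2:ℝ))]
    refine lintegral_congr fun w => ?_
    rw [ENNReal.mul_rpow_of_nonneg _ _ (by norm_num), mul_comm]
  have step5 : Zq ^ (1/q) ≤ volume Ω' ^ ((2-q)/(2*q)) * W ^ (1/(2:ℝ)) := by
    rcases eq_or_lt_of_le hq2 with hq2' | hq2'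
    · have h3 : Zq ≤ W := by
        rw [hq2'] at step3
        exact step3.trans (le_of_eq step4)
      have : Zq ^ (1/q) ≤ W ^ (1/q) := ENNReal.rpow_le_rpow h3 (by positivity)
      rw [hq2'] at this ⊢
      norm_num at this ⊢
      exact this
    · have hpq2 : Real.HolderConjugate (2/q) (2/(2-q)) := by
        refine Real.holderConjugate_iff.mpr ⟨(one_lt_div hq0).mpr hq2', ?_⟩
        rw [inv_div, inv_div]
        field_simp; ring
      have hmh : AEMeasurable (fun w =>
          ((‖fderiv ℝ f (φ w)‖₊ : ℝ≥0∞) * (‖φ' w‖₊ : ℝ≥0∞)) ^ q) (volume.restrict Ω') :=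
        rpowm (hmDfφ.mul hmφ') q
      have hZ' : Zq ≤ W ^ (q/2) * volume Ω' ^ ((2-q)/2) := by
        refine step3.trans ?_
        have hH := ENNReal.lintegral_mul_le_Lp_mul_Lq (volume.restrict Ω') hpq2
          hmh (aemeasurable_const (b := (1:ℝ≥0∞)))
        simp only [Pi.mul_apply, mul_one] at hH
        refine hH.trans (le_of_eq ?_)
        rw [one_div_div, one_div_div]
        congr 1
        · congr 1
          rw [← step4]
          refine lintegral_congr fun w => ?_
          rw [← ENNReal.rpow_mul, show q*(2/q) = (2:ℝ) by field_simp]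
        · rw [ENNReal.one_rpow, setLIntegral_one]
      calc Zq ^ (1/q) ≤ (W ^ (q/2) * volume Ω' ^ ((2-q)/2)) ^ (1/q) :=
            ENNReal.rpow_le_rpow hZ' (by positivity)
        _ = volume Ω' ^ ((2-q)/(2*q)) * W ^ (1/(2:ℝ)) := by
            rw [ENNReal.mul_rpow_of_nonneg _ _ (by positivity), ← ENNReal.rpow_mul,
              ← ENNReal.rpow_mul,
              show q/2 * (1/q) = 1/(2:ℝ) by field_simp,
              show (2-q)/2 * (1/q) = (2-q)/(2*q) by rw [div_mul_div_comm, mul_one]]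
            exact mul_comm _ _
  -- Step 4 : Hölder in p
  have step6 : W ^ (1/(2:ℝ)) ≤ volume Ω ^ ((p-2)/(2*p)) * P ^ (1/p) := by
    have hpq3 : Real.HolderConjugate (p/2) (p/(p-2)) := by
      refine Real.holderConjugate_iff.mpr ⟨(one_lt_div two_pos).mpr hp, ?_⟩
      rw [inv_div, inv_div]
      field_simp <;> ring
    have hWle : W ≤ P ^ ((2:ℝ)/p) * volume Ω ^ ((p-2)/p) := by
      have hH := ENNReal.lintegral_mul_le_Lp_mul_Lq (volume.restrict Ω) hpq3
        ((rpowm hmDf.aemeasurable 2)) (aemeasurable_const (b := (1:ℝ≥0∞)))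
      simp only [Pi.mul_apply, mul_one] at hH
      refine le_trans (le_of_eq ?_) (hH.trans (le_of_eq ?_))
      · rfl
      · rw [one_div_div, one_div_div]
        congr 1
        · congr 1
          rw [hPdef]
          refine lintegral_congr fun w => ?_
          rw [← ENNReal.rpow_mul, show (2:ℝ)*(p/2) = p by ring]
        · rw [ENNReal.one_rpow, setLIntegral_one]
    calc W ^ (1/(2:ℝ)) ≤ (P ^ ((2:ℝ)/p) * volume Ω ^ ((p-2)/p)) ^ (1/(2:ℝ)) :=
          ENNReal.rpow_le_rpow hWle (by norm_num)
      _ = volume Ω ^ ((p-2)/(2*p)) * P ^ (1/p) := by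
          rw [ENNReal.mul_rpow_of_nonneg _ _ (by norm_num), ← ENNReal.rpow_mul,
            ← ENNReal.rpow_mul,
            show (2:ℝ)/p * (1/2) = 1/p by rw [div_mul_div_comm, mul_one, div_eq_div_iff (by positivity) hp0.ne']; ring,
            show (p-2)/p * (1/2) = (p-2)/(2*p) by rw [div_mul_div_comm, mul_one, mul_comm p 2]]
          exact mul_comm _ _
  -- combine everything
  calc (∫⁻ z in Ω, (‖f z‖₊ : ℝ≥0∞) ^ s) ^ (1/s)
      ≤ X ^ (1/r) * Y ^ (1/(α*s)) := step1'
    _ ≤ (ENNReal.ofReal A * Zq ^ (1/q)) * Y ^ (1/(α*s)) := mul_le_mul_left step2 _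
    _ ≤ (ENNReal.ofReal A * (volume Ω' ^ ((2-q)/(2*q)) * W ^ (1/(2:ℝ)))) * Y ^ (1/(α*s)) :=
        mul_le_mul_left (mul_le_mul_right step5 _) _
    _ ≤ (ENNReal.ofReal A * (volume Ω' ^ ((2-q)/(2*q)) *
          (volume Ω ^ ((p-2)/(2*p)) * P ^ (1/p)))) * Y ^ (1/(α*s)) :=
        mul_le_mul_left (mul_le_mul_right (mul_le_mul_right step6 _) _) _
    _ = ENNReal.ofReal A * volume Ω' ^ ((2 - q) / (2 * q)) * volume Ω ^ ((p - 2) / (2 * p))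
          * Y ^ (1 / (α * s)) * P ^ (1 / p) := by ring
end

section
/- (Main theorem for the unit disc.) Let 𝔻 be the open unit disc in ℂ, let Ω ⊂ ℂ be a simply connected open set with finite two-dimensional Lebesgue measure, let φ : 𝔻 → Ω be a holomorphic bijection, let α > 1 with ∫_{𝔻} |φ'(w)|^{2α} dA(w) < ∞, and let p > 2. Set q* = 2αp/(αp + 2(α-1)), let q* < q < 2, set T(q) = ((q-1)/(2-q))^{(q-1)/q} · (√π · 2^{1/q})⁻¹ · (Γ(2/q)·Γ(3-2/q))^{-1/2}, and assume 𝔻 is a (pα/(α-1), q)-Sobolev–Poincaré domain with constant T(q). Then for every smooth function f : ℂ → ℝ with compact support contained in Ω, ∫_{Ω} |f(z)|^p dA(z) ≤ T(q)^p · π^{p(2-q)/(2q)} · |Ω|^{(p-2)/2} · (∫_{𝔻} |φ'(w)|^{2α} dA(w))^{1/α} · ∫_{Ω} ‖∇f(z)‖^p dA(z). -/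
open MeasureTheory Real Set
open scoped ENNReal

/-- The Aubin–Talenti constant for the `(2q/(2-q), q)`-Sobolev–Poincaré inequality. -/
noncomputable def talenti (q : ℝ) : ℝ :=
  ((q - 1) / (2 - q)) ^ ((q - 1) / q) * (Real.sqrt π * (2 : ℝ) ^ (1 / q))⁻¹
    * (Real.Gamma (2 / q) * Real.Gamma (3 - 2 / q)) ^ (-(1 / 2) : ℝ)

lemma det_aux (c : ℂ) :
    LinearMap.det ((((1 : ℂ →L[ℂ] ℂ).smulRight c).restrictScalars ℝ : ℂ →L[ℝ] ℂ) :
      ℂ →ₗ[ℝ] ℂ) = Complex.normSq c := by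
  rw [← LinearMap.det_toMatrix Complex.basisOneI, Matrix.det_fin_two]
  simp [LinearMap.toMatrix_apply, Complex.normSq_apply]

lemma cov_aux {Ω : Set ℂ} (φ φ' : ℂ → ℂ)
    (hholo : ∀ w ∈ Metric.ball (0 : ℂ) 1, HasDerivAt φ (φ' w) w)
    (hbij : Set.BijOn φ (Metric.ball (0 : ℂ) 1) Ω) (G : ℂ → ℝ≥0∞) :
    ∫⁻ z in Ω, G z
      = ∫⁻ w in Metric.ball (0 : ℂ) 1, (‖φ' w‖₊ : ℝ≥0∞) ^ (2 : ℝ) * G (φ w) := by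
  rw [← hbij.image_eq,
    lintegral_image_eq_lintegral_abs_det_fderiv_mul volume Metric.isOpen_ball.measurableSet
      (f' := fun w => ((1 : ℂ →L[ℂ] ℂ).smulRight (φ' w)).restrictScalars ℝ)
      (fun w hw =>
        ((hasDerivAt_iff_hasFDerivAt.mp (hholo w hw)).restrictScalars ℝ).hasFDerivWithinAt)
      hbij.injOn G]
  refine setLIntegral_congr_fun Metric.isOpen_ball.measurableSet (fun w _ => ?_)
  have h1 : ((((1 : ℂ →L[ℂ] ℂ).smulRight (φ' w)).restrictScalars ℝ : ℂ →L[ℝ] ℂ)).det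
      = Complex.normSq (φ' w) := det_aux _
  rw [h1]
  congr 1
  rw [abs_of_nonneg (Complex.normSq_nonneg _), Complex.normSq_eq_norm_sq,
    ENNReal.rpow_two, sq, ENNReal.ofReal_mul (norm_nonneg _), ← sq]
  exact congrArg (· ^ (2:ℕ)) (ofReal_norm (φ' w))
lemma ext_aux {Ω : Set ℂ} (φ φ' : ℂ → ℂ)
    (hholo : ∀ w ∈ Metric.ball (0 : ℂ) 1, HasDerivAt φ (φ' w) w)
    (hbij : Set.BijOn φ (Metric.ball (0 : ℂ) 1) Ω)
    (f : ℂ → ℝ) (hf : ContDiff ℝ (⊤ : ℕ∞) f) (hfc : HasCompactSupport f)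
    (hfs : tsupport f ⊆ Ω) :
    ∃ g : ℂ → ℝ, ContDiff ℝ (⊤ : ℕ∞) g ∧ HasCompactSupport g ∧
      tsupport g ⊆ Metric.ball (0 : ℂ) 1 ∧
      (∀ w ∈ Metric.ball (0 : ℂ) 1, g w = f (φ w)) ∧
      (∀ w ∈ Metric.ball (0 : ℂ) 1, ‖fderiv ℝ g w‖ ≤ ‖fderiv ℝ f (φ w)‖ * ‖φ' w‖) := by
  set D : Set ℂ := Metric.ball (0 : ℂ) 1 with hDdef
  have hDo : IsOpen D := Metric.isOpen_ball
  have hφd : DifferentiableOn ℂ φ D := fun w hw =>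
    (hholo w hw).differentiableAt.differentiableWithinAt
  have hφa : AnalyticOnNhd ℂ φ D := hφd.analyticOnNhd hDo
  -- φ is an open map on D
  have hopen : ∀ s ⊆ D, IsOpen s → IsOpen (φ '' s) := by
    rcases hφa.is_constant_or_isOpen (convex_ball (0 : ℂ) 1).isPreconnected with
      ⟨w₀, hconst⟩ | h
    · exfalso
      have h0 : (0 : ℂ) ∈ D := by simp [hDdef]
      have h1 : (1/2 : ℂ) ∈ D := by
        rw [hDdef, Metric.mem_ball, dist_zero_right]
        norm_num
      have := hbij.injOn h0 h1 (by rw [hconst 0 h0, hconst _ h1])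
      exact absurd this.symm (by norm_num)
    · exact h
  -- continuous inverse
  set ψ : ℂ → ℂ := Function.invFunOn φ D with hψdef
  have hleft : ∀ w ∈ D, ψ (φ w) = w := fun w hw => hbij.injOn.leftInvOn_invFunOn hw
  have hψmem : ∀ z ∈ Ω, ψ z ∈ D := by
    intro z hz
    obtain ⟨w, hw, rfl⟩ := hbij.surjOn hz
    rw [hleft w hw]; exact hw
  have hψc : ContinuousOn ψ Ω := by
    intro z hz
    obtain ⟨w, hw, rfl⟩ := hbij.surjOn hz
    have hfix : ψ (φ w) = w := hleft w hw
    unfold ContinuousWithinAt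
    rw [hfix, Filter.tendsto_def]
    intro t ht
    obtain ⟨t', ht't, ht'o, hwt'⟩ := mem_nhds_iff.mp ht
    rw [mem_nhdsWithin]
    refine ⟨φ '' (t' ∩ D), hopen _ inter_subset_right (ht'o.inter hDo),
      mem_image_of_mem φ ⟨hwt', hw⟩, ?_⟩
    rintro y ⟨⟨u, ⟨hu1, hu2⟩, rfl⟩, -⟩
    exact mem_preimage.mpr (by rw [hleft u hu2]; exact ht't hu1)
  -- the compact set S
  set S : Set ℂ := ψ '' tsupport f with hSdef
  have hSc : IsCompact S := hfc.image_of_continuousOn (hψc.mono hfs)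
  have hSD : S ⊆ D := by
    rintro _ ⟨z, hz, rfl⟩
    exact hψmem z (hfs hz)
  -- the function g
  set g : ℂ → ℝ := D.indicator (fun w => f (φ w)) with hgdef
  have hgeq : ∀ w ∈ D, g w = f (φ w) := fun w hw => indicator_of_mem hw _
  have hgS : ∀ w ∉ S, g w = 0 := by
    intro w hw
    by_cases hwD : w ∈ D
    · have hwt : φ w ∉ tsupport f := fun hmem => hw ⟨φ w, hmem, hleft w hwD⟩
      rw [hgeq w hwD]
      exact image_eq_zero_of_notMem_tsupport hwt
    · exact indicator_of_notMem hwD _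
  have hsupp : Function.support g ⊆ S := fun w hw => by_contra fun h => hw (hgS w h)
  have htg : tsupport g ⊆ S := closure_minimal hsupp hSc.isClosed
  have hgcs : HasCompactSupport g := hSc.of_isClosed_subset (isClosed_tsupport g) htg
  have hgloc : ∀ w ∈ D, g =ᶠ[nhds w] fun u => f (φ u) := by
    intro w hw
    filter_upwards [hDo.mem_nhds hw] with u hu
    exact hgeq u hu
  have hgsm : ContDiff ℝ (⊤ : ℕ∞) g := by
    rw [contDiff_iff_contDiffAt]
    intro w
    by_cases hwD : w ∈ D
    · exact ((hf.contDiffAt.comp w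
        (((hφa w hwD).contDiffAt).restrict_scalars ℝ)).congr_of_eventuallyEq (hgloc w hwD))
    · have hwS : w ∉ S := fun h => hwD (hSD h)
      have hz : g =ᶠ[nhds w] fun _ => (0 : ℝ) := by
        filter_upwards [hSc.isClosed.isOpen_compl.mem_nhds hwS] with u hu
        exact hgS u hu
      exact contDiffAt_const.congr_of_eventuallyEq hz
  refine ⟨g, hgsm, hgcs, htg.trans hSD, hgeq, ?_⟩
  intro w hw
  have hφf : HasFDerivAt φ (((1 : ℂ →L[ℂ] ℂ).smulRight (φ' w)).restrictScalars ℝ) w :=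
    (hasDerivAt_iff_hasFDerivAt.mp (hholo w hw)).restrictScalars ℝ
  have hcomp : HasFDerivAt (fun u => f (φ u))
      ((fderiv ℝ f (φ w)).comp (((1 : ℂ →L[ℂ] ℂ).smulRight (φ' w)).restrictScalars ℝ)) w :=
    ((hf.differentiable (by simp) (φ w)).hasFDerivAt).comp w hφf
  rw [(hgloc w hw).fderiv_eq, hcomp.fderiv]
  calc ‖(fderiv ℝ f (φ w)).comp (((1 : ℂ →L[ℂ] ℂ).smulRight (φ' w)).restrictScalars ℝ)‖
      ≤ ‖fderiv ℝ f (φ w)‖ * ‖((1 : ℂ →L[ℂ] ℂ).smulRight (φ' w)).restrictScalars ℝ‖ :=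
        ContinuousLinearMap.opNorm_comp_le _ _
    _ = ‖fderiv ℝ f (φ w)‖ * ‖φ' w‖ := by
        rw [ContinuousLinearMap.norm_restrictScalars,
          ContinuousLinearMap.norm_smulRight_apply]; simp

theorem first_dirichlet_eigenvalue_lower_estimate_disc
    (Ω : Set ℂ) (hΩo : IsOpen Ω)
    (hΩsc : SimplyConnectedSpace ↥Ω) (hΩfin : volume Ω < ⊤)
    (φ : ℂ → ℂ) (φ' : ℂ → ℂ)
    (hholo : ∀ w ∈ Metric.ball (0 : ℂ) 1, HasDerivAt φ (φ' w) w)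
    (hbij : Set.BijOn φ (Metric.ball (0 : ℂ) 1) Ω)
    (α : ℝ) (hα : 1 < α)
    (hreg : ∫⁻ w in Metric.ball (0 : ℂ) 1, (‖φ' w‖₊ : ℝ≥0∞) ^ (2 * α) < ⊤)
    (p q : ℝ) (hp : 2 < p)
    (hq1 : 2 * α * p / (α * p + 2 * (α - 1)) < q) (hq2 : q < 2)
    (hSP : IsSobolevPoincareDomain (Metric.ball (0 : ℂ) 1) (p * α / (α - 1)) q
      (talenti q))
    (f : ℂ → ℝ) (hf : ContDiff ℝ (⊤ : ℕ∞) f) (hfc : HasCompactSupport f)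
    (hfs : tsupport f ⊆ Ω) :
    ∫⁻ z in Ω, (‖f z‖₊ : ℝ≥0∞) ^ p
      ≤ ENNReal.ofReal (talenti q) ^ p * ENNReal.ofReal π ^ (p * (2 - q) / (2 * q))
          * volume Ω ^ ((p - 2) / 2)
          * (∫⁻ w in Metric.ball (0 : ℂ) 1, (‖φ' w‖₊ : ℝ≥0∞) ^ (2 * α)) ^ (1 / α)
          * ∫⁻ z in Ω, (‖fderiv ℝ f z‖₊ : ℝ≥0∞) ^ p := by
  obtain ⟨g, hgsm, hgcs, htgD, hgeq, hgd⟩ := ext_aux φ φ' hholo hbij f hf hfc hfs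
  set D : Set ℂ := Metric.ball (0 : ℂ) 1 with hDdef
  have hDm : MeasurableSet D := Metric.isOpen_ball.measurableSet
  -- numeric facts
  have hα0 : (0:ℝ) < α := by linarith
  have hα1 : (0:ℝ) < α - 1 := by linarith
  have hp0 : (0:ℝ) < p := by linarith
  have hq0 : (0:ℝ) < q := by
    have hnum : (0:ℝ) < 2*α*p := by nlinarith
    have hden : (0:ℝ) < α*p + 2*(α-1) := by nlinarith
    exact lt_trans (div_pos hnum hden) hq1
  have hqp : q < p := lt_trans hq2 hp
  set s : ℝ := q * (p - 2) / (p - q) with hsdef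
  have hs0 : (0:ℝ) < s := div_pos (mul_pos hq0 (by linarith)) (by linarith)
  have hs2 : s < 2 := by
    rw [hsdef, div_lt_iff₀ (by linarith)]
    nlinarith
  -- measurability
  have hφ'm : AEMeasurable (fun w => (‖φ' w‖₊ : ℝ≥0∞)) (volume.restrict D) := by
    have heq : (fun w => (‖deriv φ w‖₊ : ℝ≥0∞)) =ᵐ[volume.restrict D]
        (fun w => (‖φ' w‖₊ : ℝ≥0∞)) :=
      (ae_restrict_iff' hDm).2 (Filter.Eventually.of_forall fun w hw => by
        simp only []
        rw [(hholo w hw).deriv])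
    exact ((measurable_deriv φ).nnnorm.coe_nnreal_ennreal).aemeasurable.congr heq
  have hφc : ContinuousOn φ D := fun w hw =>
    ((hholo w hw).differentiableAt.continuousAt).continuousWithinAt
  have hφae : AEMeasurable φ (volume.restrict D) := hφc.aemeasurable hDm
  have hdfm : AEMeasurable (fun w => (‖fderiv ℝ f (φ w)‖₊ : ℝ≥0∞)) (volume.restrict D) :=
    ((measurable_fderiv ℝ f).comp_aemeasurable hφae).nnnorm.coe_nnreal_ennreal
  have hgm : AEMeasurable (fun w => (‖g w‖₊ : ℝ≥0∞)) (volume.restrict D) :=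
    (hgsm.continuous.measurable.nnnorm.coe_nnreal_ennreal).aemeasurable
  have cov := cov_aux φ φ' hholo hbij
  -- basic identities
  have hvol : (∫⁻ w in D, (‖φ' w‖₊ : ℝ≥0∞) ^ (2:ℝ)) = volume Ω := by
    have h := cov (fun _ => 1)
    simp only [mul_one] at h
    rw [setLIntegral_one] at h
    exact h.symm
  have hπ : volume D = ENNReal.ofReal π := by
    rw [hDdef, Complex.volume_ball]
    simp only [ENNReal.ofReal_one, one_pow, one_mul]
    rw [← NNReal.coe_real_pi, ENNReal.ofReal_coe_nnreal]
  have hN : (∫⁻ z in Ω, (‖fderiv ℝ f z‖₊ : ℝ≥0∞) ^ p)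
      = ∫⁻ w in D, (‖fderiv ℝ f (φ w)‖₊ : ℝ≥0∞) ^ p * (‖φ' w‖₊ : ℝ≥0∞) ^ (2:ℝ) := by
    rw [cov (fun z => (‖fderiv ℝ f z‖₊ : ℝ≥0∞) ^ p)]
    exact lintegral_congr fun w => mul_comm _ _
  have hpq0 : p - q ≠ 0 := sub_ne_zero.mpr hqp.ne'
  -- step A
  have stepA : (∫⁻ z in Ω, (‖f z‖₊ : ℝ≥0∞) ^ p)
      = ∫⁻ w in D, (‖g w‖₊ : ℝ≥0∞) ^ p * (‖φ' w‖₊ : ℝ≥0∞) ^ (2:ℝ) := by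
    rw [cov (fun z => (‖f z‖₊ : ℝ≥0∞) ^ p)]
    refine setLIntegral_congr_fun hDm (fun w hw => ?_)
    rw [hgeq w hw, mul_comm]
  -- step B
  have hconjα : Real.HolderConjugate (α/(α-1)) α :=
    Real.holderConjugate_iff.mpr ⟨by rw [lt_div_iff₀ hα1]; linarith,
     by rw [inv_div, inv_eq_one_div, ← add_div,
          show α - 1 + 1 = α by ring, div_self hα0.ne']⟩
  have stepB : (∫⁻ w in D, (‖g w‖₊ : ℝ≥0∞) ^ p * (‖φ' w‖₊ : ℝ≥0∞) ^ (2:ℝ))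
      ≤ (∫⁻ w in D, (‖g w‖₊ : ℝ≥0∞) ^ (p*α/(α-1))) ^ ((α-1)/α)
        * (∫⁻ w in D, (‖φ' w‖₊ : ℝ≥0∞) ^ (2*α)) ^ (1/α) := by
    have h := ENNReal.lintegral_mul_le_Lp_mul_Lq (volume.restrict D) hconjα
      (f := fun w => (‖g w‖₊ : ℝ≥0∞) ^ p) (g := fun w => (‖φ' w‖₊ : ℝ≥0∞) ^ (2:ℝ))
      (hgm.pow aemeasurable_const) (hφ'm.pow aemeasurable_const)
    simp only [Pi.mul_apply, ← ENNReal.rpow_mul,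
      show p * (α/(α-1)) = p*α/(α-1) by ring, show (2:ℝ) * α = 2*α by ring,
      one_div_div] at h
    exact h
  -- step C
  have stepC : (∫⁻ w in D, (‖g w‖₊ : ℝ≥0∞) ^ (p*α/(α-1))) ^ ((α-1)/α)
      ≤ ENNReal.ofReal (talenti q) ^ p
        * (∫⁻ w in D, (‖fderiv ℝ g w‖₊ : ℝ≥0∞) ^ q) ^ (p/q) := by
    have h := ENNReal.rpow_le_rpow (hSP g hgsm hgcs htgD) hp0.le
    rw [← ENNReal.rpow_mul, ENNReal.mul_rpow_of_nonneg _ _ hp0.le, ← ENNReal.rpow_mul,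
      show 1/(p*α/(α-1)) * p = (α-1)/α by
        field_simp,
      show 1/q*p = p/q by ring] at h
    exact h
  -- step D
  have stepD : (∫⁻ w in D, (‖fderiv ℝ g w‖₊ : ℝ≥0∞) ^ q)
      ≤ ∫⁻ w in D, ((‖fderiv ℝ f (φ w)‖₊ : ℝ≥0∞) * (‖φ' w‖₊ : ℝ≥0∞)) ^ q := by
    refine lintegral_mono_ae
      ((ae_restrict_iff' hDm).2 (Filter.Eventually.of_forall fun w hw => ?_))
    refine ENNReal.rpow_le_rpow ?_ hq0.le
    rw [← ENNReal.coe_mul, ENNReal.coe_le_coe, ← NNReal.coe_le_coe]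
    push_cast
    exact hgd w hw
  -- step E
  have hconjp : Real.HolderConjugate (p/q) (p/(p-q)) :=
    Real.holderConjugate_iff.mpr ⟨(one_lt_div hq0).2 hqp,
     by rw [inv_div, inv_div, ← add_div, show q + (p - q) = p by ring,
          div_self hp0.ne']⟩
  have h2qp : 0 ≤ q - 2*q/p := by
    rw [sub_nonneg, div_le_iff₀ hp0]
    nlinarith
  have stepE : (∫⁻ w in D, ((‖fderiv ℝ f (φ w)‖₊ : ℝ≥0∞) * (‖φ' w‖₊ : ℝ≥0∞)) ^ q)
      ≤ (∫⁻ z in Ω, (‖fderiv ℝ f z‖₊ : ℝ≥0∞) ^ p) ^ (q/p)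
        * (∫⁻ w in D, (‖φ' w‖₊ : ℝ≥0∞) ^ s) ^ ((p-q)/p) := by
    have hrw : (∫⁻ w in D, ((‖fderiv ℝ f (φ w)‖₊ : ℝ≥0∞) * (‖φ' w‖₊ : ℝ≥0∞)) ^ q)
        = ∫⁻ w in D, ((‖fderiv ℝ f (φ w)‖₊ : ℝ≥0∞) ^ q * (‖φ' w‖₊ : ℝ≥0∞) ^ (2*q/p))
            * (‖φ' w‖₊ : ℝ≥0∞) ^ (q - 2*q/p) := by
      refine lintegral_congr fun w => ?_
      rw [ENNReal.mul_rpow_of_nonneg _ _ hq0.le, mul_assoc,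
        ← ENNReal.rpow_add_of_nonneg _ _ (by positivity) h2qp,
        show 2*q/p + (q - 2*q/p) = q by ring]
    rw [hrw]
    have h := ENNReal.lintegral_mul_le_Lp_mul_Lq (volume.restrict D) hconjp
      (f := fun w => (‖fderiv ℝ f (φ w)‖₊ : ℝ≥0∞) ^ q * (‖φ' w‖₊ : ℝ≥0∞) ^ (2*q/p))
      (g := fun w => (‖φ' w‖₊ : ℝ≥0∞) ^ (q - 2*q/p))
      ((hdfm.pow aemeasurable_const).mul (hφ'm.pow aemeasurable_const))
      (hφ'm.pow aemeasurable_const)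
    simp only [Pi.mul_apply] at h
    refine h.trans (le_of_eq ?_)
    rw [one_div_div, one_div_div]
    congr 1
    · congr 1
      rw [hN]
      refine lintegral_congr fun w => ?_
      rw [ENNReal.mul_rpow_of_nonneg _ _ (div_nonneg hp0.le hq0.le),
        ← ENNReal.rpow_mul, ← ENNReal.rpow_mul,
        show q * (p/q) = p by field_simp,
        show 2*q/p * (p/q) = (2:ℝ) by field_simp]
    · congr 1
      refine lintegral_congr fun w => ?_
      rw [← ENNReal.rpow_mul,
        show (q - 2*q/p) * (p/(p-q)) = s by
          rw [hsdef]
          field_simp]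
  -- step F
  have hconj2 : Real.HolderConjugate (2/s) (2/(2-s)) :=
    Real.holderConjugate_iff.mpr ⟨(one_lt_div hs0).2 hs2,
     by rw [inv_div, inv_div, ← add_div, show s + (2 - s) = 2 by ring,
          div_self (two_ne_zero)]⟩
  have stepF : (∫⁻ w in D, (‖φ' w‖₊ : ℝ≥0∞) ^ s)
      ≤ (volume Ω) ^ (s/2) * ENNReal.ofReal π ^ ((2-s)/2) := by
    have h := ENNReal.lintegral_mul_le_Lp_mul_Lq (volume.restrict D) hconj2
      (f := fun w => (‖φ' w‖₊ : ℝ≥0∞) ^ s) (g := fun _ => (1:ℝ≥0∞))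
      (hφ'm.pow aemeasurable_const) aemeasurable_const
    simp only [Pi.mul_apply, mul_one, ENNReal.one_rpow, one_div_div] at h
    rw [setLIntegral_one, hπ] at h
    refine h.trans (le_of_eq ?_)
    congr 2
    rw [← hvol]
    refine lintegral_congr fun w => ?_
    rw [← ENNReal.rpow_mul, show s * (2/s) = (2:ℝ) by field_simp]
  -- assembly
  have hpq_nonneg : (0:ℝ) ≤ p/q := div_nonneg hp0.le hq0.le
  have hpqq_nonneg : (0:ℝ) ≤ (p-q)/q := div_nonneg (by linarith) hq0.le
  calc ∫⁻ z in Ω, (‖f z‖₊ : ℝ≥0∞) ^ p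
      = ∫⁻ w in D, (‖g w‖₊ : ℝ≥0∞) ^ p * (‖φ' w‖₊ : ℝ≥0∞) ^ (2:ℝ) := stepA
    _ ≤ (∫⁻ w in D, (‖g w‖₊ : ℝ≥0∞) ^ (p*α/(α-1))) ^ ((α-1)/α)
        * (∫⁻ w in D, (‖φ' w‖₊ : ℝ≥0∞) ^ (2*α)) ^ (1/α) := stepB
    _ ≤ (ENNReal.ofReal (talenti q) ^ p
          * (∫⁻ w in D, (‖fderiv ℝ g w‖₊ : ℝ≥0∞) ^ q) ^ (p/q))
        * (∫⁻ w in D, (‖φ' w‖₊ : ℝ≥0∞) ^ (2*α)) ^ (1/α) :=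
      mul_le_mul_left stepC _
    _ ≤ (ENNReal.ofReal (talenti q) ^ p
          * ((∫⁻ z in Ω, (‖fderiv ℝ f z‖₊ : ℝ≥0∞) ^ p) ^ (q/p)
            * (∫⁻ w in D, (‖φ' w‖₊ : ℝ≥0∞) ^ s) ^ ((p-q)/p)) ^ (p/q))
        * (∫⁻ w in D, (‖φ' w‖₊ : ℝ≥0∞) ^ (2*α)) ^ (1/α) := by
      exact mul_le_mul_left (mul_le_mul_right
        (ENNReal.rpow_le_rpow (stepD.trans stepE) hpq_nonneg) _) _
    _ = (ENNReal.ofReal (talenti q) ^ p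
          * ((∫⁻ z in Ω, (‖fderiv ℝ f z‖₊ : ℝ≥0∞) ^ p)
            * (∫⁻ w in D, (‖φ' w‖₊ : ℝ≥0∞) ^ s) ^ ((p-q)/q)))
        * (∫⁻ w in D, (‖φ' w‖₊ : ℝ≥0∞) ^ (2*α)) ^ (1/α) := by
      rw [ENNReal.mul_rpow_of_nonneg _ _ hpq_nonneg, ← ENNReal.rpow_mul,
        ← ENNReal.rpow_mul,
        show q/p*(p/q) = 1 by field_simp,
        show (p-q)/p*(p/q) = (p-q)/q by field_simp,
        ENNReal.rpow_one]
    _ ≤ (ENNReal.ofReal (talenti q) ^ p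
          * ((∫⁻ z in Ω, (‖fderiv ℝ f z‖₊ : ℝ≥0∞) ^ p)
            * ((volume Ω) ^ (s/2) * ENNReal.ofReal π ^ ((2-s)/2)) ^ ((p-q)/q)))
        * (∫⁻ w in D, (‖φ' w‖₊ : ℝ≥0∞) ^ (2*α)) ^ (1/α) :=
      mul_le_mul_left (mul_le_mul_right (mul_le_mul_right
        (ENNReal.rpow_le_rpow stepF hpqq_nonneg) _) _) _
    _ = ENNReal.ofReal (talenti q) ^ p * ENNReal.ofReal π ^ (p * (2 - q) / (2 * q))
          * volume Ω ^ ((p - 2) / 2)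
          * (∫⁻ w in D, (‖φ' w‖₊ : ℝ≥0∞) ^ (2 * α)) ^ (1 / α)
          * ∫⁻ z in Ω, (‖fderiv ℝ f z‖₊ : ℝ≥0∞) ^ p := by
      rw [ENNReal.mul_rpow_of_nonneg _ _ hpqq_nonneg, ← ENNReal.rpow_mul,
        ← ENNReal.rpow_mul,
        show s/2*((p-q)/q) = (p-2)/2 by
          rw [hsdef]
          field_simp,
        show (2-s)/2*((p-q)/q) = p*(2-q)/(2*q) by
          rw [hsdef]
          field_simp
          ring]
      ring
end

section
/- For every natural number n ≥ 1, the map φ(z) = z + zⁿ/n is injective on the open unit disc 𝔻 = {z ∈ ℂ : |z| < 1}. -/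
/-!
Multiplying by `n`, `n (φ a - φ b) = (a - b) (n + ∑_{i<n} aⁱ bⁿ⁻¹⁻ⁱ)`. On the disc every term
`aⁱ bʲ` of the sum has real part `> -1` (it is `1` when `i = j = 0` and has norm `< 1` otherwise),
so the second factor has positive real part and cannot vanish.
-/

open Finset

namespace Complex

theorem neg_one_lt_re_pow_mul_pow {a b : ℂ} (ha : ‖a‖ < 1) (hb : ‖b‖ < 1) (i j : ℕ) :
    -1 < (a ^ i * b ^ j).re := by
  rcases Nat.eq_zero_or_pos (i + j) with hij | hij
  · obtain ⟨rfl, rfl⟩ : i = 0 ∧ j = 0 := by omega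
    norm_num
  have hnorm : ‖a ^ i * b ^ j‖ < 1 := by
    rw [norm_mul, norm_pow, norm_pow]
    rcases Nat.eq_zero_or_pos i with rfl | hi
    · simpa using pow_lt_one₀ (norm_nonneg b) hb (by omega)
    · exact mul_lt_one_of_nonneg_of_lt_one_left (by positivity)
        (pow_lt_one₀ (norm_nonneg a) ha hi.ne') (pow_le_one₀ (norm_nonneg b) hb.le)
  linarith [neg_abs_le (a ^ i * b ^ j).re, abs_re_le_norm (a ^ i * b ^ j)]

theorem neg_lt_re_geom_sum₂ {a b : ℂ} (ha : ‖a‖ < 1) (hb : ‖b‖ < 1) {n : ℕ} (hn : 0 < n) :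
    -(n : ℝ) < (∑ i ∈ range n, a ^ i * b ^ (n - 1 - i)).re := by
  calc -(n : ℝ) = ∑ _i ∈ range n, (-1 : ℝ) := by simp
    _ < _ := by
      rw [re_sum]
      exact sum_lt_sum_of_nonempty (nonempty_range_iff.mpr hn.ne') fun _ _ =>
        neg_one_lt_re_pow_mul_pow ha hb _ _

end Complex

theorem epicycloid_map_injective (n : ℕ) (hn : 1 ≤ n) :
    Set.InjOn (fun z : ℂ => z + z ^ n / n) (Metric.ball (0 : ℂ) 1) := by
  intro a ha b hb hab
  rw [mem_ball_zero_iff] at ha hb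
  set S := ∑ i ∈ range n, a ^ i * b ^ (n - 1 - i)
  have hfactor : (a - b) * (n + S) = 0 := by
    have hsum : S * (a - b) = a ^ n - b ^ n := geom_sum₂_mul a b n
    have hn0 : (n : ℂ) ≠ 0 := Nat.cast_ne_zero.mpr (by omega)
    field_simp at hab
    linear_combination hab + hsum
  have hS : (n + S : ℂ) ≠ 0 := fun h => by
    have hre := congrArg Complex.re h
    simp only [Complex.add_re, Complex.natCast_re, Complex.zero_re] at hre
    linarith [Complex.neg_lt_re_geom_sum₂ ha hb hn]
  exact sub_eq_zero.mp ((mul_eq_zero.mp hfactor).resolve_right hS)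
end

section
/- (Eigenvalue estimate for epicycloid domains.) Let n ≥ 1 be a natural number, let Ω_n = φ(𝔻) be the image of the open unit disc under φ(z) = z + zⁿ/n, and let p > 2. Let q satisfy 2p/(p+2) < q < 2, set T(q) = ((q-1)/(2-q))^{(q-1)/q} · (√π · 2^{1/q})⁻¹ · (Γ(2/q)·Γ(3-2/q))^{-1/2}, and assume 𝔻 is a (p,q)-Sobolev–Poincaré domain with constant T(q). Then for every smooth function f : ℂ → ℝ with compact support contained in Ω_n, ∫_{Ω_n} |f(z)|^p dA(z) ≤ T(q)^p · π^{p/q} · (4/π) · ((n+1)/n)^{p-2} · ∫_{Ω_n} ‖∇f(z)‖^p dA(z). -/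
open MeasureTheory Real Set
open scoped ENNReal

/-- Change of variables for scalings of the plane, `∫ h(Rw) dw = R⁻² ∫ h`. -/
lemma lintegral_comp_smul_complex (h : ℂ → ℝ≥0∞) (hm : Measurable h) {R : ℝ} (hR : 0 < R) :
    ∫⁻ w, h (R • w) = ENNReal.ofReal ((R ^ 2)⁻¹) * ∫⁻ w, h w := by
  rw [← lintegral_map hm (measurable_const_smul R),
    Measure.map_addHaar_smul (μ := volume) hR.ne', lintegral_smul_measure]
  congr 1
  rw [Complex.finrank_real_complex]
  rw [abs_inv, abs_of_nonneg (by positivity)]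

/-- Hölder's inequality for powers on a set. -/
lemma holder_rpow_aux {s : Set ℂ} (h : ℂ → ℝ≥0∞) (hm : Measurable h) {p q : ℝ}
    (hq : 0 < q) (hqp : q < p) :
    ∫⁻ z in s, h z ^ q ≤ (∫⁻ z in s, h z ^ p) ^ (q / p) * volume s ^ (1 - q / p) := by
  have hp : 0 < p := hq.trans hqp
  have ha1 : 1 < p / q := (one_lt_div hq).2 hqp
  have hab : (p / q).HolderConjugate ((p / q) / (p / q - 1)) := .conjExponent ha1
  have key := ENNReal.lintegral_mul_le_Lp_mul_Lq (volume.restrict s) hab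
    ((hm.pow_const q).aemeasurable) (aemeasurable_const (b := (1 : ℝ≥0∞)))
  have e1 : ∀ z, (h z ^ q) ^ (p / q) = h z ^ p := by
    intro z
    rw [← ENNReal.rpow_mul]
    congr 1
    field_simp
  have e2 : (1 : ℝ) / (p / q) = q / p := by field_simp
  have e3 : (1 : ℝ) / ((p / q) / (p / q - 1)) = 1 - q / p := by
    rw [one_div_div]
    field_simp
  simp only [e1, ENNReal.one_rpow, lintegral_const, Measure.restrict_apply MeasurableSet.univ,
    univ_inter, one_mul] at key
  rw [e2, e3] at key
  simpa only [Pi.mul_apply, mul_one] using key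

/-- The main real-constant computation. -/
lemma const_computation {R T p q : ℝ} (hR0 : 0 < R) (hR2 : R ≤ 2) (hT : 0 ≤ T)
    (hp : 2 < p) (hq0 : 0 < q) :
    R ^ 2 * T ^ p * (R ^ q * (R ^ 2)⁻¹) ^ (p / q) * (π * R ^ 2) ^ (p / q - 1)
      ≤ T ^ p * π ^ (p / q) * (4 / π) * R ^ (p - 2) := by
  have hπ := Real.pi_pos
  have h2 : (R : ℝ) ^ 2 = R ^ (2 : ℝ) := by
    rw [← Real.rpow_natCast R 2]; norm_num
  rw [h2, ← Real.rpow_neg hR0.le, ← Real.rpow_add hR0,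
    ← Real.rpow_mul hR0.le, Real.mul_rpow hπ.le (Real.rpow_nonneg hR0.le _),
    ← Real.rpow_mul hR0.le]
  have hsplit : R ^ (p : ℝ) = R ^ (2:ℝ) * R ^ ((q + -2) * (p / q)) * R ^ (2 * (p / q - 1)) := by
    rw [← Real.rpow_add hR0, ← Real.rpow_add hR0]
    congr 1
    field_simp
    ring
  have hRp : R ^ (p : ℝ) = R ^ (p - 2) * R ^ (2:ℝ) := by
    rw [← Real.rpow_add hR0]; ring_nf
  have hR4 : R ^ (2:ℝ) ≤ 4 := by
    calc R ^ (2:ℝ) ≤ 2 ^ (2:ℝ) := Real.rpow_le_rpow hR0.le hR2 (by norm_num)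
      _ = 4 := by
        have := Real.rpow_natCast (2:ℝ) 2
        norm_num at this
        linarith
  calc R ^ (2:ℝ) * T ^ p * R ^ ((q + -2) * (p / q)) * (π ^ (p / q - 1) * R ^ (2 * (p / q - 1)))
      = T ^ p * π ^ (p / q - 1) * R ^ (p:ℝ) := by rw [hsplit]; ring
    _ = T ^ p * π ^ (p / q - 1) * (R ^ (p - 2) * R ^ (2:ℝ)) := by rw [← hRp]
    _ ≤ T ^ p * π ^ (p / q - 1) * (R ^ (p - 2) * 4) := by gcongr
    _ = T ^ p * π ^ (p / q) * (4 / π) * R ^ (p - 2) := by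
        rw [Real.rpow_sub hπ, Real.rpow_one]
        field_simp

theorem eigenvalue_estimate_epicycloid
    (n : ℕ) (hn : 1 ≤ n)
    (Ωn : Set ℂ) (hΩn : Ωn = (fun z : ℂ => z + z ^ n / n) '' Metric.ball (0 : ℂ) 1)
    (p q : ℝ) (hp : 2 < p)
    (hq1 : 2 * p / (p + 2) < q) (hq2 : q < 2)
    (hSP : IsSobolevPoincareDomain (Metric.ball (0 : ℂ) 1) p q (talenti q))
    (f : ℂ → ℝ) (hf : ContDiff ℝ (⊤ : ℕ∞) f) (hfc : HasCompactSupport f)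
    (hfs : tsupport f ⊆ Ωn) :
    ∫⁻ z in Ωn, (‖f z‖₊ : ℝ≥0∞) ^ p
      ≤ ENNReal.ofReal
            (talenti q ^ p * π ^ (p / q) * (4 / π) * (((n : ℝ) + 1) / n) ^ (p - 2))
          * ∫⁻ z in Ωn, (‖fderiv ℝ f z‖₊ : ℝ≥0∞) ^ p := by
  classical
  have hn0 : (0:ℝ) < n := by exact_mod_cast hn
  set R : ℝ := ((n : ℝ) + 1) / n with hRdef
  have hR1 : 1 < R := by
    rw [hRdef, lt_div_iff₀ hn0]; linarith
  have hR0 : 0 < R := by linarith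
  have hR2 : R ≤ 2 := by
    rw [hRdef, div_le_iff₀ hn0]
    have h1 : (1:ℝ) ≤ n := by exact_mod_cast hn
    linarith
  have hp0 : 0 < p := by linarith
  have hq1' : 1 < q := by
    have h1 : 1 < 2 * p / (p + 2) := by
      rw [lt_div_iff₀ (by linarith)]; linarith
    linarith
  have hq0 : 0 < q := by linarith
  have hqp : q < p := by linarith
  have hπ := Real.pi_pos
  -- Ωn is contained in the ball of radius R
  have hsub : Ωn ⊆ Metric.ball (0:ℂ) R := by
    rw [hΩn]
    rintro w ⟨z, hz, rfl⟩
    simp only [Metric.mem_ball, dist_zero_right] at hz ⊢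
    have h1 : ‖z ^ n / (n : ℂ)‖ ≤ 1 / n := by
      rw [norm_div, norm_pow]
      have h2 : ‖(n:ℂ)‖ = (n:ℝ) := by simp
      rw [h2]
      gcongr
      exact pow_le_one₀ (norm_nonneg z) hz.le
    calc ‖z + z ^ n / n‖ ≤ ‖z‖ + ‖z ^ n / (n:ℂ)‖ := norm_add_le _ _
      _ < 1 + 1 / n := by
          have := add_lt_add_of_lt_of_le hz h1
          linarith
      _ = R := by rw [hRdef]; field_simp
  -- the rescaled function g
  set g : ℂ → ℝ := fun w => f (R • w) with hgdef
  have hg : ContDiff ℝ (⊤ : ℕ∞) g := hf.comp (contDiff_id.const_smul R)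
  have hgsupp : tsupport g ⊆ Metric.ball (0:ℂ) 1 := by
    have h1 : Function.support g ⊆ (fun w : ℂ => R • w) ⁻¹' tsupport f := by
      intro w hw
      exact subset_closure hw
    have h2 : tsupport g ⊆ (fun w : ℂ => R • w) ⁻¹' Metric.ball (0:ℂ) R := by
      refine (closure_minimal h1 ?_).trans (preimage_mono (hfs.trans hsub))
      exact (isClosed_tsupport f).preimage (continuous_const_smul R)
    intro w hw
    have h3 := h2 hw
    simp only [mem_preimage, Metric.mem_ball, dist_zero_right, norm_smul,
      Real.norm_eq_abs, abs_of_pos hR0] at h3 ⊢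
    nlinarith [norm_nonneg w]
  have hgc : HasCompactSupport g :=
    HasCompactSupport.of_support_subset_isCompact (isCompact_closedBall 0 1)
      ((subset_closure.trans hgsupp).trans Metric.ball_subset_closedBall)
  -- derivative of g
  have hgd : ∀ w, fderiv ℝ g w = R • fderiv ℝ f (R • w) := by
    intro w
    have h1 : HasFDerivAt (fun x : ℂ => R • x) (R • ContinuousLinearMap.id ℝ ℂ) w :=
      (hasFDerivAt_id w).const_smul R
    have h2 : HasFDerivAt f (fderiv ℝ f (R • w)) (R • w) :=
      (hf.differentiable (by simp) (R • w)).hasFDerivAt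
    have h3 := h2.comp w h1
    have h4 : (fderiv ℝ f (R • w)).comp (R • ContinuousLinearMap.id ℝ ℂ)
        = R • fderiv ℝ f (R • w) := by
      ext x
      simp
    rw [← h4]
    exact h3.fderiv
  -- measurability
  have mf1 : Measurable fun z => (‖f z‖₊ : ℝ≥0∞) ^ p :=
    ((hf.continuous.measurable.nnnorm).coe_nnreal_ennreal).pow_const p
  have mdf : Measurable fun z => (‖fderiv ℝ f z‖₊ : ℝ≥0∞) := by
    exact ((hf.continuous_fderiv (by simp)).measurable.nnnorm).coe_nnreal_ennreal
  have mf2 : Measurable fun z => (‖fderiv ℝ f z‖₊ : ℝ≥0∞) ^ q := mdf.pow_const q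
  -- the LHS integral over the unit ball
  have keyA : ∫⁻ w in Metric.ball (0:ℂ) 1, (‖g w‖₊ : ℝ≥0∞) ^ p
      = ENNReal.ofReal ((R ^ 2)⁻¹) * ∫⁻ z in Ωn, (‖f z‖₊ : ℝ≥0∞) ^ p := by
    rw [setLIntegral_eq_of_support_subset (s := Metric.ball (0:ℂ) 1)
      (f := fun w => (‖g w‖₊ : ℝ≥0∞) ^ p) ?_,
      setLIntegral_eq_of_support_subset (s := Ωn)
      (f := fun z => (‖f z‖₊ : ℝ≥0∞) ^ p) ?_]
    · exact lintegral_comp_smul_complex _ mf1 hR0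
    · intro z hz
      have : f z ≠ 0 := by
        intro h0
        simp only [Function.mem_support] at hz
        apply hz
        rw [h0]
        simp [ENNReal.zero_rpow_of_pos hp0]
      exact hfs (subset_closure this)
    · intro w hw
      have : g w ≠ 0 := by
        intro h0
        simp only [Function.mem_support] at hw
        apply hw
        rw [h0]
        simp [ENNReal.zero_rpow_of_pos hp0]
      exact hgsupp (subset_closure this)
  -- the gradient integral over the unit ball
  have keyB : ∫⁻ w in Metric.ball (0:ℂ) 1, (‖fderiv ℝ g w‖₊ : ℝ≥0∞) ^ q
      = ENNReal.ofReal (R ^ q) * (ENNReal.ofReal ((R ^ 2)⁻¹)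
          * ∫⁻ z in Ωn, (‖fderiv ℝ f z‖₊ : ℝ≥0∞) ^ q) := by
    have e1 : ∀ w, (‖fderiv ℝ g w‖₊ : ℝ≥0∞) ^ q
        = ENNReal.ofReal (R ^ q) * (‖fderiv ℝ f (R • w)‖₊ : ℝ≥0∞) ^ q := by
      intro w
      rw [hgd w, nnnorm_smul]
      push_cast
      rw [ENNReal.mul_rpow_of_nonneg _ _ hq0.le]
      congr 1
      rw [← ENNReal.ofReal_rpow_of_pos hR0]
      congr 1
      exact Real.enorm_eq_ofReal hR0.le
    calc ∫⁻ w in Metric.ball (0:ℂ) 1, (‖fderiv ℝ g w‖₊ : ℝ≥0∞) ^ q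
        = ∫⁻ w in Metric.ball (0:ℂ) 1,
            ENNReal.ofReal (R ^ q) * (‖fderiv ℝ f (R • w)‖₊ : ℝ≥0∞) ^ q := by
          exact setLIntegral_congr_fun measurableSet_ball
            (fun w _ => e1 w)
      _ = ENNReal.ofReal (R ^ q)
            * ∫⁻ w in Metric.ball (0:ℂ) 1, (‖fderiv ℝ f (R • w)‖₊ : ℝ≥0∞) ^ q := by
          rw [lintegral_const_mul]
          exact (mdf.comp (measurable_const_smul R)).pow_const q
      _ = ENNReal.ofReal (R ^ q) * (ENNReal.ofReal ((R ^ 2)⁻¹)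
            * ∫⁻ z in Ωn, (‖fderiv ℝ f z‖₊ : ℝ≥0∞) ^ q) := by
          congr 1
          rw [setLIntegral_eq_of_support_subset ?_,
            setLIntegral_eq_of_support_subset (s := Ωn) ?_]
          · exact lintegral_comp_smul_complex _ mf2 hR0
          · intro z hz
            have hz' : fderiv ℝ f z ≠ 0 := by
              intro h0
              simp only [Function.mem_support] at hz
              exact hz (by rw [h0]; simp [ENNReal.zero_rpow_of_pos hq0])
            exact hfs (support_fderiv_subset ℝ (Function.mem_support.mpr hz'))
          · intro w hw
            have hw' : fderiv ℝ f (R • w) ≠ 0 := by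
              intro h0
              simp only [Function.mem_support] at hw
              exact hw (by rw [h0]; simp [ENNReal.zero_rpow_of_pos hq0])
            have hmem : R • w ∈ Metric.ball (0:ℂ) R :=
              hsub (hfs (support_fderiv_subset ℝ (Function.mem_support.mpr hw')))
            simp only [Metric.mem_ball, dist_zero_right, norm_smul,
              Real.norm_eq_abs, abs_of_pos hR0] at hmem ⊢
            nlinarith [norm_nonneg w]
  -- nonnegativity of the Talenti constant
  have hT : 0 ≤ talenti q := by
    unfold talenti
    have h1 : (0:ℝ) ≤ (q - 1) / (2 - q) := div_nonneg (by linarith) (by linarith)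
    have h2 : (0:ℝ) ≤ Real.Gamma (2 / q) * Real.Gamma (3 - 2 / q) :=
      mul_nonneg (Real.Gamma_nonneg_of_nonneg (by positivity))
        (Real.Gamma_nonneg_of_nonneg (by
          have h4 : 2 / q ≤ 2 := by rw [div_le_iff₀ hq0]; linarith
          linarith))
    have h3 : (0:ℝ) ≤ (Real.sqrt π * (2:ℝ) ^ (1/q))⁻¹ := by positivity
    exact mul_nonneg (mul_nonneg (Real.rpow_nonneg h1 _) h3) (Real.rpow_nonneg h2 _)
  set T : ℝ := talenti q with hTdef
  set I := ∫⁻ z in Ωn, (‖f z‖₊ : ℝ≥0∞) ^ p with hI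
  set J := ∫⁻ z in Ωn, (‖fderiv ℝ f z‖₊ : ℝ≥0∞) ^ p with hJ
  set K := ∫⁻ z in Ωn, (‖fderiv ℝ f z‖₊ : ℝ≥0∞) ^ q with hK
  have step := hSP g hg hgc hgsupp
  rw [keyA, keyB] at step
  have step2 : ENNReal.ofReal ((R ^ 2)⁻¹) * I
      ≤ ENNReal.ofReal T ^ p
          * (ENNReal.ofReal (R ^ q) * (ENNReal.ofReal ((R ^ 2)⁻¹) * K)) ^ (p / q) := by
    have h1 := ENNReal.rpow_le_rpow step hp0.le
    rwa [← ENNReal.rpow_mul, one_div_mul_cancel hp0.ne', ENNReal.rpow_one,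
      ENNReal.mul_rpow_of_nonneg _ _ hp0.le, ← ENNReal.rpow_mul,
      show 1 / q * p = p / q by ring] at h1
  have hold : K ≤ J ^ (q / p) * volume Ωn ^ (1 - q / p) :=
    holder_rpow_aux _ mdf hq0 hqp
  have hvol : volume Ωn ≤ ENNReal.ofReal (π * R ^ 2) := by
    calc volume Ωn ≤ volume (Metric.ball (0:ℂ) R) := measure_mono hsub
      _ = ENNReal.ofReal R ^ 2 * NNReal.pi := Complex.volume_ball 0 R
      _ = ENNReal.ofReal (π * R ^ 2) := by
          rw [ENNReal.ofReal_mul Real.pi_pos.le, ENNReal.ofReal_pow hR0.le, mul_comm,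
            ← ENNReal.ofReal_coe_nnreal, NNReal.coe_real_pi]
  have hexp : (0:ℝ) ≤ p / q - 1 := by
    have : 1 ≤ p / q := le_of_lt ((one_lt_div hq0).2 hqp)
    linarith
  have hpq0 : (0:ℝ) ≤ p / q := by positivity
  have hKpq : K ^ (p / q) ≤ J * ENNReal.ofReal (π * R ^ 2) ^ (p / q - 1) := by
    calc K ^ (p / q) ≤ (J ^ (q / p) * volume Ωn ^ (1 - q / p)) ^ (p / q) :=
        ENNReal.rpow_le_rpow hold hpq0
      _ = J ^ (q / p * (p / q)) * volume Ωn ^ ((1 - q / p) * (p / q)) := by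
          rw [ENNReal.mul_rpow_of_nonneg _ _ hpq0, ← ENNReal.rpow_mul, ← ENNReal.rpow_mul]
      _ = J * volume Ωn ^ (p / q - 1) := by
          rw [show q / p * (p / q) = 1 by field_simp,
            show (1 - q / p) * (p / q) = p / q - 1 by field_simp,
            ENNReal.rpow_one]
      _ ≤ J * ENNReal.ofReal (π * R ^ 2) ^ (p / q - 1) :=
          mul_le_mul_right (ENNReal.rpow_le_rpow hvol hexp) J
  have hC : ENNReal.ofReal (R ^ 2) * ENNReal.ofReal T ^ p
        * (ENNReal.ofReal (R ^ q) * ENNReal.ofReal ((R ^ 2)⁻¹)) ^ (p / q)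
        * ENNReal.ofReal (π * R ^ 2) ^ (p / q - 1)
      ≤ ENNReal.ofReal (T ^ p * π ^ (p / q) * (4 / π) * R ^ (p - 2)) := by
    rw [ENNReal.ofReal_rpow_of_nonneg hT hp0.le,
      ← ENNReal.ofReal_mul (by positivity),
      ← ENNReal.ofReal_mul (by positivity),
      ENNReal.ofReal_rpow_of_pos (by positivity),
      ← ENNReal.ofReal_mul (by positivity),
      ENNReal.ofReal_rpow_of_pos (by positivity),
      ← ENNReal.ofReal_mul (by positivity)]
    exact ENNReal.ofReal_le_ofReal (const_computation hR0 hR2 hT hp hq0)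
  calc I = ENNReal.ofReal (R ^ 2) * (ENNReal.ofReal ((R ^ 2)⁻¹) * I) := by
        rw [← mul_assoc, ← ENNReal.ofReal_mul (by positivity),
          mul_inv_cancel₀ (by positivity), ENNReal.ofReal_one, one_mul]
    _ ≤ ENNReal.ofReal (R ^ 2) * (ENNReal.ofReal T ^ p
          * (ENNReal.ofReal (R ^ q) * (ENNReal.ofReal ((R ^ 2)⁻¹) * K)) ^ (p / q)) :=
        mul_le_mul_right step2 _
    _ = ENNReal.ofReal (R ^ 2) * ENNReal.ofReal T ^ p
          * (ENNReal.ofReal (R ^ q) * ENNReal.ofReal ((R ^ 2)⁻¹)) ^ (p / q) * K ^ (p / q) := by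
        rw [show ENNReal.ofReal (R ^ q) * (ENNReal.ofReal ((R ^ 2)⁻¹) * K)
            = ENNReal.ofReal (R ^ q) * ENNReal.ofReal ((R ^ 2)⁻¹) * K from by ring,
          ENNReal.mul_rpow_of_nonneg _ _ hpq0]
        ring
    _ ≤ ENNReal.ofReal (R ^ 2) * ENNReal.ofReal T ^ p
          * (ENNReal.ofReal (R ^ q) * ENNReal.ofReal ((R ^ 2)⁻¹)) ^ (p / q)
          * (J * ENNReal.ofReal (π * R ^ 2) ^ (p / q - 1)) :=
        mul_le_mul_right hKpq _
    _ = (ENNReal.ofReal (R ^ 2) * ENNReal.ofReal T ^ p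
          * (ENNReal.ofReal (R ^ q) * ENNReal.ofReal ((R ^ 2)⁻¹)) ^ (p / q)
          * ENNReal.ofReal (π * R ^ 2) ^ (p / q - 1)) * J := by ring
    _ ≤ ENNReal.ofReal (T ^ p * π ^ (p / q) * (4 / π) * R ^ (p - 2)) * J :=
        mul_le_mul_left hC J
end
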